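/- Let H1 and H2 be two σ-MAGs with the same node set V that satisfy Condition 1. Let π be a path of minimal length among all paths between v0 and vn in H1 that are m-open given Z ⊆ V, and let π' be the path in H2 with the same node sequence as π. Then for every node v_k on π, v_k is a collider on π if and only if v_k is a collider on π'. -/
import Mathlib


/-- An edge mark: tail or arrowhead. -/
inductive Mark : Type
  | tail : Mark
  | arrow : Mark
  deriving DecidableEq

/-- A mixed graph, with directed edges (`dir a b` means `a → b`), bidirected edges and
undirected edges. -/
structure MixedGraph (V : Type*) where
  dir : V → V → Prop
  bidir : V → V → Prop
  undir : V → V → Prop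
  bidir_symm : ∀ a b, bidir a b → bidir b a
  undir_symm : ∀ a b, undir a b → undir b a

variable {V : Type*}

/-- There is an edge between `x` and `y` carrying mark `m₁` at `x` and mark `m₂` at `y`. -/
def MixedGraph.EdgeMk (G : MixedGraph V) (x y : V) : Mark → Mark → Prop
  | Mark.tail, Mark.arrow => G.dir x y
  | Mark.arrow, Mark.tail => G.dir y x
  | Mark.arrow, Mark.arrow => G.bidir x y
  | Mark.tail, Mark.tail => G.undir x y

theorem MixedGraph.edgeMk_symm {G : MixedGraph V} {x y : V} {m₁ m₂ : Mark}
    (h : G.EdgeMk x y m₁ m₂) : G.EdgeMk y x m₂ m₁ := by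
  cases m₁ <;> cases m₂ <;>
    first
      | exact h
      | exact G.bidir_symm _ _ h
      | exact G.undir_symm _ _ h

/-- `x` and `y` are adjacent: some edge joins them. -/
def MixedGraph.Adj (G : MixedGraph V) (x y : V) : Prop :=
  G.dir x y ∨ G.dir y x ∨ G.bidir x y ∨ G.undir x y

/-- There is an edge between `a` and `b` with an arrowhead at `a` (i.e. `a ←∗ b`). -/
def MixedGraph.ArrowAt (G : MixedGraph V) (a b : V) : Prop :=
  G.dir b a ∨ G.bidir a b

/-- There is an edge between `a` and `b` with a tail at `a` (i.e. `a —∗ b`). -/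
def MixedGraph.TailAt (G : MixedGraph V) (a b : V) : Prop :=
  G.dir a b ∨ G.undir a b

/-- A walk of length `n`: vertices `vert 0, …, vert n`; the `i`-th edge joins `vert i`
and `vert (i+1)`, carrying mark `mk1 i` at `vert i` and mark `mk2 i` at `vert (i+1)`. -/
structure MixedGraph.Walk (G : MixedGraph V) (n : ℕ) where
  vert : ℕ → V
  mk1 : ℕ → Mark
  mk2 : ℕ → Mark
  valid : ∀ i < n, G.EdgeMk (vert i) (vert (i + 1)) (mk1 i) (mk2 i)

/-- A walk is a path if its vertices are pairwise distinct. -/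
def MixedGraph.Walk.IsPath {G : MixedGraph V} {n : ℕ} (w : G.Walk n) : Prop :=
  ∀ i j, i ≤ n → j ≤ n → w.vert i = w.vert j → i = j

/-- Position `k` is a collider on the walk: both incident edges have an arrowhead
at `vert k`. -/
def MixedGraph.Walk.IsCollider {G : MixedGraph V} {n : ℕ} (w : G.Walk n) (k : ℕ) : Prop :=
  0 < k ∧ k < n ∧ w.mk2 (k - 1) = Mark.arrow ∧ w.mk1 k = Mark.arrow

/-- `a` is an ancestor of `b`: there is a directed walk from `a` to `b`. -/
def MixedGraph.Anc (G : MixedGraph V) (a b : V) : Prop :=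
  Relation.ReflTransGen G.dir a b

/-- `a` is an ancestor of some element of `A`. -/
def MixedGraph.AncS (G : MixedGraph V) (a : V) (A : Set V) : Prop :=
  ∃ b ∈ A, G.Anc a b

/-- `b` lies in the strongly connected component of `a`. -/
def MixedGraph.Sc (G : MixedGraph V) (a b : V) : Prop :=
  G.Anc a b ∧ G.Anc b a

/-- There is an anterior path from `a` to `b`: a path all of whose edges have a tail
mark at the endpoint nearer `a`. -/
def MixedGraph.AnteriorPath (G : MixedGraph V) (a b : V) : Prop :=
  ∃ (n : ℕ) (w : G.Walk n), w.IsPath ∧ w.vert 0 = a ∧ w.vert n = b ∧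
    ∀ i < n, w.mk1 i = Mark.tail

/-- The walk is inducing: every non-endpoint node is a collider that is an ancestor
of one of the endpoints. -/
def MixedGraph.Walk.IsInducing {G : MixedGraph V} {n : ℕ} (w : G.Walk n) : Prop :=
  ∀ k, 0 < k → k < n →
    w.IsCollider k ∧ (G.Anc (w.vert k) (w.vert 0) ∨ G.Anc (w.vert k) (w.vert n))

/-- There is an inducing path between `a` and `b`. -/
def MixedGraph.InducingPath (G : MixedGraph V) (a b : V) : Prop :=
  ∃ (n : ℕ) (w : G.Walk n), w.IsPath ∧ w.vert 0 = a ∧ w.vert n = b ∧ w.IsInducing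

/-- There is an inducing walk between `a` and `b`. -/
def MixedGraph.InducingWalk (G : MixedGraph V) (a b : V) : Prop :=
  ∃ (n : ℕ) (w : G.Walk n), w.vert 0 = a ∧ w.vert n = b ∧ w.IsInducing

/-- The neighborhood of `a` (its undirected-edge neighbors) is complete. -/
def MixedGraph.CompleteNbh (G : MixedGraph V) (a : V) : Prop :=
  ∀ b c, G.undir a b → G.undir a c → b ≠ c → G.undir b c

/-- A σ-maximal ancestral graph (σ-MAG). -/
structure MixedGraph.IsSigmaMAG (G : MixedGraph V) : Prop where
  /-- no self-loops -/
  no_self : ∀ a : V, ¬ G.dir a a ∧ ¬ G.bidir a a ∧ ¬ G.undir a a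
  /-- at most one edge between any two nodes -/
  at_most_one : ∀ a b : V,
    (G.dir a b → ¬ G.dir b a ∧ ¬ G.bidir a b ∧ ¬ G.undir a b) ∧
    (G.bidir a b → ¬ G.undir a b)
  /-- ancestral: an anterior path from `a` to `b` excludes an edge into `a` -/
  ancestral : ∀ a b : V, G.AnteriorPath a b → ¬ G.ArrowAt a b
  /-- maximal: no inducing path between non-adjacent nodes -/
  maximal : ∀ a b : V, a ≠ b → ¬ G.Adj a b → ¬ G.InducingPath a b
  /-- σ-complete, part 1: `a ∗→ b — c` forces `a, c` adjacent -/
  sigma_complete₁ : ∀ a b c : V, G.ArrowAt b a → G.undir b c → G.Adj a c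
  /-- σ-complete, part 2: `a ∗→ b — c` and `b — d` force `c, d` adjacent -/
  sigma_complete₂ : ∀ a b c d : V, G.ArrowAt b a → G.undir b c → G.undir b d →
    c ≠ d → G.Adj c d

/-- The walk is m-open given `Z`. -/
def MixedGraph.Walk.MOpen {G : MixedGraph V} {n : ℕ} (w : G.Walk n) (Z : Set V) : Prop :=
  (∀ k ≤ n, ¬ w.IsCollider k → w.vert k ∉ Z) ∧
  (∀ k, w.IsCollider k → G.AncS (w.vert k) Z) ∧
  (∀ k, 0 < k → k < n →
    ¬ (w.mk2 (k - 1) = Mark.arrow ∧ w.mk1 k = Mark.tail ∧ w.mk2 k = Mark.tail) ∧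
    ¬ (w.mk1 (k - 1) = Mark.tail ∧ w.mk2 (k - 1) = Mark.tail ∧ w.mk1 k = Mark.arrow))

/-- `X` is m-separated from `Y` given `Z`: every walk from `X` to `Y` is m-blocked. -/
def MixedGraph.MSep (G : MixedGraph V) (X Y Z : Set V) : Prop :=
  ∀ (n : ℕ) (w : G.Walk n), w.vert 0 ∈ X → w.vert n ∈ Y → ¬ w.MOpen Z

/-- A directed mixed graph (DMG): no undirected edges and no self-loops. -/
def MixedGraph.IsDMG (G : MixedGraph V) : Prop :=
  (∀ a b : V, ¬ G.undir a b) ∧ ∀ a : V, ¬ G.dir a a ∧ ¬ G.bidir a a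

/-- Position `k` is an unblockable non-collider on the walk (in a DMG). -/
def MixedGraph.Walk.Unblockable {G : MixedGraph V} {n : ℕ} (w : G.Walk n) (k : ℕ) : Prop :=
  0 < k ∧ k < n ∧
  ((w.mk1 (k - 1) = Mark.arrow ∧ w.mk2 (k - 1) = Mark.tail ∧ w.mk1 k = Mark.arrow ∧
      G.Sc (w.vert k) (w.vert (k - 1))) ∨
   (w.mk2 (k - 1) = Mark.arrow ∧ w.mk1 k = Mark.tail ∧ w.mk2 k = Mark.arrow ∧
      G.Sc (w.vert k) (w.vert (k + 1))) ∨
   (w.mk1 (k - 1) = Mark.arrow ∧ w.mk2 (k - 1) = Mark.tail ∧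
      w.mk1 k = Mark.tail ∧ w.mk2 k = Mark.arrow ∧
      G.Sc (w.vert k) (w.vert (k - 1)) ∧ G.Sc (w.vert k) (w.vert (k + 1))))

/-- The walk is σ-open given `W`. -/
def MixedGraph.Walk.SigmaOpen {G : MixedGraph V} {n : ℕ} (w : G.Walk n) (W : Set V) : Prop :=
  (∀ k, w.IsCollider k → G.AncS (w.vert k) W) ∧
  (∀ k ≤ n, ¬ w.IsCollider k → ¬ w.Unblockable k → w.vert k ∉ W)

/-- `X` is σ-separated from `Y` given `W`: every walk from `X` to `Y` is σ-blocked. -/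
def MixedGraph.SigmaSep (G : MixedGraph V) (X Y W : Set V) : Prop :=
  ∀ (n : ℕ) (w : G.Walk n), w.vert 0 ∈ X → w.vert n ∈ Y → ¬ w.SigmaOpen W

/-- The walk is σ-inducing given `S`: each collider is an ancestor of the endpoints or
of `S`, and each non-endpoint non-collider is unblockable. -/
def MixedGraph.Walk.IsSigmaInducing {G : MixedGraph V} {n : ℕ} (w : G.Walk n) (S : Set V) :
    Prop :=
  (∀ k, w.IsCollider k → G.AncS (w.vert k) ({w.vert 0, w.vert n} ∪ S)) ∧
  (∀ k, 0 < k → k < n → ¬ w.IsCollider k → w.Unblockable k)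

/-- There is a σ-inducing path given `S` between `a` and `b`. -/
def MixedGraph.SigmaInducingPath (G : MixedGraph V) (S : Set V) (a b : V) : Prop :=
  ∃ (n : ℕ) (w : G.Walk n), w.IsPath ∧ w.vert 0 = a ∧ w.vert n = b ∧ w.IsSigmaInducing S

/-- The mixed graph `H` (on node set `V`) represents the graph `G` (on node set
`V⁺ = V ∪ S`, where `V` is embedded via `ι` and `S = (Set.range ι)ᶜ` is the set of
selection nodes) given `S`. -/
def Represents {V W : Type*} (H : MixedGraph V) (G : MixedGraph W) (ι : V → W) : Prop :=
  Function.Injective ι ∧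
  (∀ a : V, ¬ H.dir a a ∧ ¬ H.bidir a a ∧ ¬ H.undir a a) ∧
  (∀ a b : V,
    (H.dir a b → ¬ H.dir b a ∧ ¬ H.bidir a b ∧ ¬ H.undir a b) ∧
    (H.bidir a b → ¬ H.undir a b)) ∧
  (∀ a b : V, a ≠ b → (H.Adj a b ↔ G.SigmaInducingPath (Set.range ι)ᶜ (ι a) (ι b))) ∧
  (∀ a b : V, H.ArrowAt a b → ¬ G.AncS (ι a) ({ι b} ∪ (Set.range ι)ᶜ)) ∧
  (∀ a b : V, H.TailAt a b → G.AncS (ι a) ({ι b} ∪ (Set.range ι)ᶜ))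

/-- The walk (of length `n ≥ 3`) is a discriminating path for its second-to-last node
`vert (n-1)`: the endpoints are non-adjacent, and every node strictly between `vert 0`
and `vert (n-1)` is a collider and a parent of `vert n`. -/
def MixedGraph.Walk.IsDiscriminating {G : MixedGraph V} {n : ℕ} (w : G.Walk n) : Prop :=
  3 ≤ n ∧ w.IsPath ∧ ¬ G.Adj (w.vert 0) (w.vert n) ∧
  ∀ k, 0 < k → k < n - 1 → w.IsCollider k ∧ G.dir (w.vert k) (w.vert n)

/-- The subwalk starting at position `i`, of length `m`. -/
def MixedGraph.Walk.shift {G : MixedGraph V} {n : ℕ} (w : G.Walk n) (i m : ℕ)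
    (h : i + m ≤ n) : G.Walk m where
  vert k := w.vert (i + k)
  mk1 k := w.mk1 (i + k)
  mk2 k := w.mk2 (i + k)
  valid k hk := by
    have hv := w.valid (i + k) (by omega)
    have he : i + (k + 1) = i + k + 1 := by omega
    show G.EdgeMk (w.vert (i + k)) (w.vert (i + (k + 1))) (w.mk1 (i + k)) (w.mk2 (i + k))
    rw [he]
    exact hv

/-- The reversed walk. -/
def MixedGraph.Walk.reverse {G : MixedGraph V} {n : ℕ} (w : G.Walk n) : G.Walk n where
  vert k := w.vert (n - k)
  mk1 k := w.mk2 (n - 1 - k)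
  mk2 k := w.mk1 (n - 1 - k)
  valid i hi := by
    have hv := w.valid (n - 1 - i) (by omega)
    have h1 : n - 1 - i + 1 = n - i := by omega
    have h2 : n - (i + 1) = n - 1 - i := by omega
    rw [h1] at hv
    show G.EdgeMk (w.vert (n - i)) (w.vert (n - (i + 1))) (w.mk2 (n - 1 - i)) (w.mk1 (n - 1 - i))
    rw [h2]
    exact MixedGraph.edgeMk_symm hv

/-- `(a, b, c)` is an unshielded collider in `G`. -/
def MixedGraph.UnshieldedCollider (G : MixedGraph V) (a b c : V) : Prop :=
  a ≠ c ∧ ¬ G.Adj a c ∧ G.ArrowAt b a ∧ G.ArrowAt b c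

/-- Condition 1 for two σ-MAGs on the same node set: same adjacencies, same unshielded
colliders, and agreement of the collider status of the discriminated node on
corresponding discriminating paths. -/
def Condition1 {V : Type*} (H₁ H₂ : MixedGraph V) : Prop :=
  (∀ a b, H₁.Adj a b ↔ H₂.Adj a b) ∧
  (∀ a b c, H₁.UnshieldedCollider a b c ↔ H₂.UnshieldedCollider a b c) ∧
  (∀ (n : ℕ) (w₁ : H₁.Walk n) (w₂ : H₂.Walk n),
    (∀ k, w₂.vert k = w₁.vert k) →
    w₁.IsDiscriminating → w₂.IsDiscriminating →
    (w₁.IsCollider (n - 1) ↔ w₂.IsCollider (n - 1)))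

/-- `H₁` and `H₂` are m-Markov equivalent. -/
def MMarkovEquiv {V : Type*} (H₁ H₂ : MixedGraph V) : Prop :=
  ∀ X Y Z : Set V, H₁.MSep X Y Z ↔ H₂.MSep X Y Z

/-! ### Auxiliary machinery -/

namespace MAux

open MixedGraph Mark

variable {V : Type*} {G : MixedGraph V}

lemma adj_symm {x y : V} (h : G.Adj x y) : G.Adj y x := by
  rcases h with h | h | h | h
  · exact Or.inr (Or.inl h)
  · exact Or.inl h
  · exact Or.inr (Or.inr (Or.inl (G.bidir_symm _ _ h)))
  · exact Or.inr (Or.inr (Or.inr (G.undir_symm _ _ h)))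

/-- Pairwise exclusivity of edge types in a σ-MAG. -/
lemma excl (hG : G.IsSigmaMAG) {x y : V} :
    (G.dir x y → ¬ G.dir y x ∧ ¬ G.bidir x y ∧ ¬ G.bidir y x ∧ ¬ G.undir x y ∧ ¬ G.undir y x)
    ∧ (G.bidir x y → ¬ G.undir x y ∧ ¬ G.undir y x) := by
  constructor
  · intro h
    obtain ⟨h1, h2, h3⟩ := (hG.at_most_one x y).1 h
    refine ⟨h1, h2, fun hb => h2 (G.bidir_symm _ _ hb), h3, fun hu => h3 (G.undir_symm _ _ hu)⟩
  · intro h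
    refine ⟨(hG.at_most_one x y).2 h, fun hu => (hG.at_most_one x y).2 h (G.undir_symm _ _ hu)⟩

lemma arrowAt_of_edgeMk_left (hG : G.IsSigmaMAG) {x y : V} {m₂ : Mark}
    (h : G.EdgeMk x y Mark.arrow m₂) : G.ArrowAt x y := by
  cases m₂
  · exact Or.inl h
  · exact Or.inr h

lemma arrowAt_of_edgeMk_right (hG : G.IsSigmaMAG) {x y : V} {m₁ : Mark}
    (h : G.EdgeMk x y m₁ Mark.arrow) : G.ArrowAt y x := by
  cases m₁
  · exact Or.inl h
  · exact Or.inr (G.bidir_symm _ _ h)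

lemma tailAt_of_edgeMk_left (hG : G.IsSigmaMAG) {x y : V} {m₂ : Mark}
    (h : G.EdgeMk x y Mark.tail m₂) : G.TailAt x y := by
  cases m₂
  · exact Or.inr h
  · exact Or.inl h

lemma tailAt_of_edgeMk_right (hG : G.IsSigmaMAG) {x y : V} {m₁ : Mark}
    (h : G.EdgeMk x y m₁ Mark.tail) : G.TailAt y x := by
  cases m₁
  · exact Or.inr (G.undir_symm _ _ h)
  · exact Or.inl h

lemma not_arrowAt_and_tailAt (hG : G.IsSigmaMAG) {x y : V} :
    ¬ (G.ArrowAt x y ∧ G.TailAt x y) := by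
  rintro ⟨ha, ht⟩
  rcases ha with ha | ha <;> rcases ht with ht | ht
  · exact ((excl hG).1 ht).1 ha
  · exact ((excl hG).1 ha).2.2.2.2 ht
  · exact (((excl hG).1 ht).2.1) ha
  · exact ((excl hG).2 ha).1 ht

lemma not_arrowAt_of_tailAt (hG : G.IsSigmaMAG) {x y : V} (h : G.TailAt x y) :
    ¬ G.ArrowAt x y := fun ha => not_arrowAt_and_tailAt hG ⟨ha, h⟩

lemma edgeMk_mk1_arrow_iff (hG : G.IsSigmaMAG) {x y : V} {m₁ m₂ : Mark}
    (h : G.EdgeMk x y m₁ m₂) : m₁ = Mark.arrow ↔ G.ArrowAt x y := by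
  constructor
  · intro hm; subst hm; exact arrowAt_of_edgeMk_left hG h
  · intro ha
    cases m₁ with
    | arrow => rfl
    | tail => exact absurd ha (not_arrowAt_of_tailAt hG (tailAt_of_edgeMk_left hG h))

lemma edgeMk_mk2_arrow_iff (hG : G.IsSigmaMAG) {x y : V} {m₁ m₂ : Mark}
    (h : G.EdgeMk x y m₁ m₂) : m₂ = Mark.arrow ↔ G.ArrowAt y x := by
  constructor
  · intro hm; subst hm; exact arrowAt_of_edgeMk_right hG h
  · intro ha
    cases m₂ with
    | arrow => rfl
    | tail => exact absurd ha (not_arrowAt_of_tailAt hG (tailAt_of_edgeMk_right hG h))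

lemma edgeMk_mk1_tail_iff (hG : G.IsSigmaMAG) {x y : V} {m₁ m₂ : Mark}
    (h : G.EdgeMk x y m₁ m₂) : m₁ = Mark.tail ↔ G.TailAt x y := by
  constructor
  · intro hm; subst hm; exact tailAt_of_edgeMk_left hG h
  · intro ht
    cases m₁ with
    | tail => rfl
    | arrow => exact absurd (arrowAt_of_edgeMk_left hG h) (not_arrowAt_of_tailAt hG ht)

lemma edgeMk_mk2_tail_iff (hG : G.IsSigmaMAG) {x y : V} {m₁ m₂ : Mark}
    (h : G.EdgeMk x y m₁ m₂) : m₂ = Mark.tail ↔ G.TailAt y x := by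
  constructor
  · intro hm; subst hm; exact tailAt_of_edgeMk_right hG h
  · intro ht
    cases m₂ with
    | tail => rfl
    | arrow => exact absurd (arrowAt_of_edgeMk_right hG h) (not_arrowAt_of_tailAt hG ht)

lemma edgeMk_undir_iff (hG : G.IsSigmaMAG) {x y : V} {m₁ m₂ : Mark}
    (h : G.EdgeMk x y m₁ m₂) : (m₁ = Mark.tail ∧ m₂ = Mark.tail) ↔ G.undir x y := by
  constructor
  · rintro ⟨h1, h2⟩; subst h1; subst h2; exact h
  · intro hu
    refine ⟨(edgeMk_mk1_tail_iff hG h).2 (Or.inr hu),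
      (edgeMk_mk2_tail_iff hG h).2 (Or.inr (G.undir_symm _ _ hu))⟩

lemma adj_of_edgeMk {x y : V} {m₁ m₂ : Mark} (h : G.EdgeMk x y m₁ m₂) : G.Adj x y := by
  cases m₁ <;> cases m₂
  · exact Or.inr (Or.inr (Or.inr h))
  · exact Or.inl h
  · exact Or.inr (Or.inl h)
  · exact Or.inr (Or.inr (Or.inl h))

lemma edgeMk_of_adj {x y : V} (h : G.Adj x y) : ∃ m₁ m₂, G.EdgeMk x y m₁ m₂ := by
  rcases h with h | h | h | h
  · exact ⟨Mark.tail, Mark.arrow, h⟩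
  · exact ⟨Mark.arrow, Mark.tail, h⟩
  · exact ⟨Mark.arrow, Mark.arrow, h⟩
  · exact ⟨Mark.tail, Mark.tail, h⟩

lemma tailAt_cases (hG : G.IsSigmaMAG) {x y : V} (hadj : G.Adj x y) (h : G.TailAt x y) :
    G.dir x y ∨ G.undir x y := h

lemma arrowAt_or_tailAt (hG : G.IsSigmaMAG) {x y : V} (h : G.Adj x y) :
    G.ArrowAt x y ∨ G.TailAt x y := by
  rcases h with h | h | h | h
  · exact Or.inr (Or.inl h)
  · exact Or.inl (Or.inl h)
  · exact Or.inl (Or.inr h)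
  · exact Or.inr (Or.inr h)

/-- In a σ-MAG, a node is an ancestor of `Z` whenever it has a directed edge to a node
which is an ancestor of `Z`. -/
lemma ancS_of_dir {x y : V} {Z : Set V} (h : G.dir x y) (hy : G.AncS y Z) : G.AncS x Z := by
  obtain ⟨z, hz, hyz⟩ := hy
  exact ⟨z, hz, Relation.ReflTransGen.head h hyz⟩

lemma ancS_of_mem {x : V} {Z : Set V} (h : x ∈ Z) : G.AncS x Z :=
  ⟨x, h, Relation.ReflTransGen.refl⟩

end MAux

section Walks

open MixedGraph Mark

variable {V : Type*} {G : MixedGraph V}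

/-- A single-edge walk. -/
def walkSingle {x y : V} {m₁ m₂ : Mark} (h : G.EdgeMk x y m₁ m₂) : G.Walk 1 where
  vert i := if i = 0 then x else y
  mk1 _ := m₁
  mk2 _ := m₂
  valid i hi := by
    have : i = 0 := by omega
    subst this
    simpa using h

/-- Concatenation of walks. -/
def walkAppend {m m' : ℕ} (w₁ : G.Walk m) (w₂ : G.Walk m') (hmm : w₂.vert 0 = w₁.vert m) :
    G.Walk (m + m') where
  vert t := if t < m then w₁.vert t else w₂.vert (t - m)
  mk1 t := if t < m then w₁.mk1 t else w₂.mk1 (t - m)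
  mk2 t := if t < m then w₁.mk2 t else w₂.mk2 (t - m)
  valid t ht := by
    by_cases h : t < m
    · simp only [if_pos h]
      by_cases h' : t + 1 < m
      · simpa [if_pos h'] using w₁.valid t h
      · have ht1 : t + 1 = m := by omega
        subst ht1
        simp only [if_neg h', Nat.sub_self, hmm]
        exact w₁.valid t h
    · have h1 : ¬ t + 1 < m := by omega
      simp only [if_neg h, if_neg h1]
      have h2 : t + 1 - m = (t - m) + 1 := by omega
      rw [h2]
      exact w₂.valid (t - m) (by omega)

lemma walkAppend_vert0 {m m' : ℕ} (w₁ : G.Walk m) (w₂ : G.Walk m')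
    (hmm : w₂.vert 0 = w₁.vert m) : (walkAppend w₁ w₂ hmm).vert 0 = w₁.vert 0 := by
  by_cases h : 0 < m
  · simp [walkAppend, h]
  · have : m = 0 := by omega
    subst this
    simpa [walkAppend] using hmm

lemma walkAppend_vertEnd {m m' : ℕ} (w₁ : G.Walk m) (w₂ : G.Walk m')
    (hmm : w₂.vert 0 = w₁.vert m) : (walkAppend w₁ w₂ hmm).vert (m + m') = w₂.vert m' := by
  by_cases h : m + m' < m
  · omega
  · simp [walkAppend, if_neg h]

/-- From any walk whose first marks are all tails, extract an anterior path. -/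
lemma anteriorPath_of_walk {m : ℕ} (w : G.Walk m) (ht : ∀ i < m, w.mk1 i = Mark.tail) :
    G.AnteriorPath (w.vert 0) (w.vert m) := by
  induction m using Nat.strong_induction_on with
  | _ m ih =>
    by_cases hp : w.IsPath
    · exact ⟨m, w, hp, rfl, rfl, ht⟩
    · -- find a repeat i < j
      simp only [MixedGraph.Walk.IsPath] at hp
      push_neg at hp
      obtain ⟨i, j, hi, hj, heq, hne⟩ := hp
      -- wlog i < j
      rcases Nat.lt_or_ge i j with hij | hij
      case _ =>
        exact cutRepeat w ht ih i j hij hj heq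
      case _ =>
        have hij' : j < i := by omega
        exact cutRepeat w ht ih j i hij' hi heq.symm
where
  cutRepeat {m : ℕ} (w : G.Walk m) (ht : ∀ i < m, w.mk1 i = Mark.tail)
      (ih : ∀ m' < m, ∀ (w' : G.Walk m'), (∀ i < m', w'.mk1 i = Mark.tail) →
        G.AnteriorPath (w'.vert 0) (w'.vert m'))
      (i j : ℕ) (hij : i < j) (hj : j ≤ m) (heq : w.vert i = w.vert j) :
      G.AnteriorPath (w.vert 0) (w.vert m) := by
    set d := j - i with hd
    have hd1 : 1 ≤ d := by omega
    let w' : G.Walk (m - d) :=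
      { vert := fun t => if t < i then w.vert t else w.vert (t + d)
        mk1 := fun t => if t < i then w.mk1 t else w.mk1 (t + d)
        mk2 := fun t => if t < i then w.mk2 t else w.mk2 (t + d)
        valid := by
          intro t htm
          by_cases h : t < i
          · simp only [if_pos h]
            by_cases h' : t + 1 < i
            · simpa [if_pos h'] using w.valid t (by omega)
            · have ht1 : t + 1 = i := by omega
              have hv : w.vert (t + 1 + d) = w.vert (t + 1) := by
                rw [ht1]
                have : i + d = j := by omega
                rw [this, ← heq]
              simp only [if_neg h', hv]
              exact w.valid t (by omega)
          · have h1 : ¬ t + 1 < i := by omega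
            simp only [if_neg h, if_neg h1]
            have h2 : t + 1 + d = (t + d) + 1 := by omega
            rw [h2]
            exact w.valid (t + d) (by omega) }
    have h0 : w'.vert 0 = w.vert 0 := by
      by_cases h : 0 < i
      · simp [w', h]
      · have : i = 0 := by omega
        subst this
        simp only [w', if_neg (lt_irrefl 0)]
        have : (0 : ℕ) + d = j := by omega
        rw [this, ← heq]
    have hm : w'.vert (m - d) = w.vert m := by
      have h : ¬ (m - d) < i := by omega
      simp only [w', if_neg h]
      congr 1
      omega
    have := ih (m - d) (by omega) w' (by
      intro t htm
      by_cases h : t < i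
      · simpa [w', if_pos h] using ht t (by omega)
      · simpa [w', if_neg h] using ht (t + d) (by omega))
    rwa [h0, hm] at this

lemma anterior_cons {x y z : V} {m₂ : Mark} (h : G.EdgeMk x y Mark.tail m₂)
    (hyz : G.AnteriorPath y z) : G.AnteriorPath x z := by
  obtain ⟨m, w, _, h0, hm, htl⟩ := hyz
  have hseam : w.vert 0 = (walkSingle h).vert 1 := by simp [walkSingle, h0]
  have := anteriorPath_of_walk (walkAppend (walkSingle h) w hseam) (by
    intro i hi
    by_cases hI : i < 1
    · have : i = 0 := by omega
      subst this
      simp [walkAppend, walkSingle]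
    · simp only [walkAppend, if_neg hI]
      exact htl (i - 1) (by omega))
  have h0 : (walkSingle h).vert 0 = x := by simp [walkSingle]
  rw [walkAppend_vert0, walkAppend_vertEnd, hm, h0] at this
  exact this

lemma anterior_single {x y : V} {m₂ : Mark} (h : G.EdgeMk x y Mark.tail m₂) :
    G.AnteriorPath x y := by
  have := anteriorPath_of_walk (walkSingle h) (by intro i _; simp [walkSingle])
  simpa [walkSingle] using this

lemma anterior_of_tailAt {x y : V} (h : G.TailAt x y) : G.AnteriorPath x y := by
  rcases h with h | h
  · exact anterior_single (m₂ := Mark.arrow) h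
  · exact anterior_single (m₂ := Mark.tail) h

lemma anterior_cons_tailAt {x y z : V} (h : G.TailAt x y) (hyz : G.AnteriorPath y z) :
    G.AnteriorPath x z := by
  rcases h with h | h
  · exact anterior_cons (m₂ := Mark.arrow) h hyz
  · exact anterior_cons (m₂ := Mark.tail) h hyz

/-- The fundamental "ancestral kill": a two-edge anterior chain excludes an arrowhead. -/
lemma kill2 (hG : G.IsSigmaMAG) {x y z : V} (h1 : G.TailAt x y) (h2 : G.TailAt y z)
    (ha : G.ArrowAt x z) : False :=
  hG.ancestral x z (anterior_cons_tailAt h1 (anterior_of_tailAt h2)) ha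

lemma kill1 (hG : G.IsSigmaMAG) {x y : V} (h1 : G.TailAt x y) (ha : G.ArrowAt x y) : False :=
  hG.ancestral x y (anterior_of_tailAt h1) ha

end Walks

section Splice

open MixedGraph Mark

variable {V : Type*} {G : MixedGraph V}

/-- The spliced walk: follow `w` up to `ℓ`, cross the chord to `w.vert r`, continue. -/
def spliceWalk {n : ℕ} (w : G.Walk n) (ℓ r : ℕ) (hlr : ℓ + 2 ≤ r) (hrn : r ≤ n)
    {m₁ m₂ : Mark} (he : G.EdgeMk (w.vert ℓ) (w.vert r) m₁ m₂) :
    G.Walk (ℓ + 1 + (n - r)) where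
  vert i := if i ≤ ℓ then w.vert i else w.vert (i + (r - ℓ - 1))
  mk1 i := if i < ℓ then w.mk1 i else if i = ℓ then m₁ else w.mk1 (i + (r - ℓ - 1))
  mk2 i := if i < ℓ then w.mk2 i else if i = ℓ then m₂ else w.mk2 (i + (r - ℓ - 1))
  valid i hi := by
    rcases lt_trichotomy i ℓ with h | h | h
    · rw [if_pos (le_of_lt h), if_pos (by omega : i + 1 ≤ ℓ), if_pos h, if_pos h]
      exact w.valid i (by omega)
    · subst h
      rw [if_pos le_rfl, if_neg (by omega : ¬ i + 1 ≤ i), if_neg (lt_irrefl i), if_pos rfl,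
        if_neg (lt_irrefl i), if_pos rfl, (by omega : i + 1 + (r - i - 1) = r)]
      exact he
    · rw [if_neg (by omega : ¬ i ≤ ℓ), if_neg (by omega : ¬ i + 1 ≤ ℓ),
        if_neg (by omega : ¬ i < ℓ), if_neg (by omega : ¬ i = ℓ),
        if_neg (by omega : ¬ i < ℓ), if_neg (by omega : ¬ i = ℓ),
        (by omega : i + 1 + (r - ℓ - 1) = (i + (r - ℓ - 1)) + 1)]
      exact w.valid (i + (r - ℓ - 1)) (by omega)

variable {n : ℕ} {w : G.Walk n} {ℓ r : ℕ} {hlr : ℓ + 2 ≤ r} {hrn : r ≤ n}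
  {m₁ m₂ : Mark} {he : G.EdgeMk (w.vert ℓ) (w.vert r) m₁ m₂}

lemma spliceWalk_vert_le {i : ℕ} (h : i ≤ ℓ) :
    (spliceWalk w ℓ r hlr hrn he).vert i = w.vert i := if_pos h

lemma spliceWalk_vert_gt {i : ℕ} (h : ℓ < i) :
    (spliceWalk w ℓ r hlr hrn he).vert i = w.vert (i + (r - ℓ - 1)) := if_neg (by omega)

lemma spliceWalk_mk1_lt {i : ℕ} (h : i < ℓ) :
    (spliceWalk w ℓ r hlr hrn he).mk1 i = w.mk1 i := if_pos h

lemma spliceWalk_mk1_eq : (spliceWalk w ℓ r hlr hrn he).mk1 ℓ = m₁ := by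
  show (if ℓ < ℓ then _ else if ℓ = ℓ then _ else _) = m₁
  rw [if_neg (lt_irrefl ℓ), if_pos rfl]

lemma spliceWalk_mk1_gt {i : ℕ} (h : ℓ < i) :
    (spliceWalk w ℓ r hlr hrn he).mk1 i = w.mk1 (i + (r - ℓ - 1)) := by
  show (if i < ℓ then _ else if i = ℓ then _ else _) = _
  rw [if_neg (by omega : ¬ i < ℓ), if_neg (by omega : ¬ i = ℓ)]

lemma spliceWalk_mk2_lt {i : ℕ} (h : i < ℓ) :
    (spliceWalk w ℓ r hlr hrn he).mk2 i = w.mk2 i := if_pos h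

lemma spliceWalk_mk2_eq : (spliceWalk w ℓ r hlr hrn he).mk2 ℓ = m₂ := by
  show (if ℓ < ℓ then _ else if ℓ = ℓ then _ else _) = m₂
  rw [if_neg (lt_irrefl ℓ), if_pos rfl]

lemma spliceWalk_mk2_gt {i : ℕ} (h : ℓ < i) :
    (spliceWalk w ℓ r hlr hrn he).mk2 i = w.mk2 (i + (r - ℓ - 1)) := by
  show (if i < ℓ then _ else if i = ℓ then _ else _) = _
  rw [if_neg (by omega : ¬ i < ℓ), if_neg (by omega : ¬ i = ℓ)]

lemma spliceWalk_isPath (hpath : w.IsPath) :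
    (spliceWalk w ℓ r hlr hrn he).IsPath := by
  intro i j hi hj hv
  have key : ∀ t, t ≤ ℓ + 1 + (n - r) →
      (spliceWalk w ℓ r hlr hrn he).vert t = w.vert (if t ≤ ℓ then t else t + (r - ℓ - 1)) := by
    intro t _
    by_cases h : t ≤ ℓ
    · rw [spliceWalk_vert_le h, if_pos h]
    · rw [spliceWalk_vert_gt (by omega), if_neg h]
  rw [key i hi, key j hj] at hv
  have hinj := hpath _ _ (by split <;> omega) (by split <;> omega) hv
  by_cases h1 : i ≤ ℓ <;> by_cases h2 : j ≤ ℓ <;>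
    (first | (rw [if_pos h1] at hinj) | (rw [if_neg h1] at hinj)) <;>
    (first | (rw [if_pos h2] at hinj) | (rw [if_neg h2] at hinj)) <;> omega

/-- Collider positions on the splice away from the frontier correspond to those of `w`. -/
lemma spliceWalk_collider_lt {k : ℕ} (hk : k < ℓ) :
    ((spliceWalk w ℓ r hlr hrn he).IsCollider k ↔ w.IsCollider k) := by
  unfold MixedGraph.Walk.IsCollider
  constructor
  · rintro ⟨h0, hL, ha, hb⟩
    rw [spliceWalk_mk2_lt (by omega)] at ha
    rw [spliceWalk_mk1_lt hk] at hb
    exact ⟨h0, by omega, ha, hb⟩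
  · rintro ⟨h0, hL, ha, hb⟩
    refine ⟨h0, by omega, ?_, ?_⟩
    · rwa [spliceWalk_mk2_lt (by omega)]
    · rwa [spliceWalk_mk1_lt hk]

lemma spliceWalk_collider_gt {k : ℕ} (hk : ℓ + 1 < k) :
    ((spliceWalk w ℓ r hlr hrn he).IsCollider k ↔
      (k < ℓ + 1 + (n - r) ∧ w.IsCollider (k + (r - ℓ - 1)))) := by
  unfold MixedGraph.Walk.IsCollider
  constructor
  · rintro ⟨h0, hL, ha, hb⟩
    rw [spliceWalk_mk2_gt (by omega), (by omega : k - 1 + (r - ℓ - 1) = k + (r - ℓ - 1) - 1)] at ha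
    rw [spliceWalk_mk1_gt (by omega)] at hb
    exact ⟨hL, by omega, by omega, ha, hb⟩
  · rintro ⟨hL, h0, hn, ha, hb⟩
    refine ⟨by omega, hL, ?_, ?_⟩
    · rw [spliceWalk_mk2_gt (by omega), (by omega : k - 1 + (r - ℓ - 1) = k + (r - ℓ - 1) - 1)]
      exact ha
    · rw [spliceWalk_mk1_gt (by omega)]
      exact hb

end Splice

section Block

open MixedGraph Mark

variable {V : Type*} {G : MixedGraph V}
variable {n : ℕ} {w : G.Walk n} {ℓ r : ℕ} {hlr : ℓ + 2 ≤ r} {hrn : r ≤ n}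
  {m₁ m₂ : Mark} {he : G.EdgeMk (w.vert ℓ) (w.vert r) m₁ m₂}

lemma spliceWalk_collider_at_left (hl0 : 0 < ℓ) :
    ((spliceWalk w ℓ r hlr hrn he).IsCollider ℓ ↔
      (w.mk2 (ℓ - 1) = Mark.arrow ∧ m₁ = Mark.arrow)) := by
  unfold MixedGraph.Walk.IsCollider
  constructor
  · rintro ⟨-, -, ha, hb⟩
    rw [spliceWalk_mk2_lt (by omega)] at ha
    rw [spliceWalk_mk1_eq] at hb
    exact ⟨ha, hb⟩
  · rintro ⟨ha, hb⟩
    refine ⟨hl0, by omega, ?_, ?_⟩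
    · rw [spliceWalk_mk2_lt (by omega)]; exact ha
    · rw [spliceWalk_mk1_eq]; exact hb

lemma spliceWalk_collider_at_right :
    ((spliceWalk w ℓ r hlr hrn he).IsCollider (ℓ + 1) ↔
      (r < n ∧ m₂ = Mark.arrow ∧ w.mk1 r = Mark.arrow)) := by
  unfold MixedGraph.Walk.IsCollider
  constructor
  · rintro ⟨-, hL, ha, hb⟩
    rw [(by omega : ℓ + 1 - 1 = ℓ), spliceWalk_mk2_eq] at ha
    rw [spliceWalk_mk1_gt (by omega), (by omega : ℓ + 1 + (r - ℓ - 1) = r)] at hb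
    exact ⟨by omega, ha, hb⟩
  · rintro ⟨hr, ha, hb⟩
    refine ⟨by omega, by omega, ?_, ?_⟩
    · rw [(by omega : ℓ + 1 - 1 = ℓ), spliceWalk_mk2_eq]; exact ha
    · rw [spliceWalk_mk1_gt (by omega), (by omega : ℓ + 1 + (r - ℓ - 1) = r)]; exact hb

/-- The key minimality consequence: a spliced walk is blocked, and the blockage can only
occur at one of the two frontier nodes. -/
lemma splice_block {Z : Set V}
    (hlr : ℓ + 2 ≤ r) (hrn : r ≤ n) (he : G.EdgeMk (w.vert ℓ) (w.vert r) m₁ m₂)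
    (hpath : w.IsPath) (hopen : w.MOpen Z)
    (hmin : ∀ (m : ℕ) (w' : G.Walk m), w'.IsPath → w'.vert 0 = w.vert 0 →
      w'.vert m = w.vert n → w'.MOpen Z → n ≤ m) :
    (0 < ℓ ∧
      ((w.vert ℓ ∈ Z ∧ ¬(w.mk2 (ℓ-1) = Mark.arrow ∧ m₁ = Mark.arrow))
       ∨ (w.mk2 (ℓ-1) = Mark.arrow ∧ m₁ = Mark.arrow ∧ ¬ G.AncS (w.vert ℓ) Z)
       ∨ (w.mk2 (ℓ-1) = Mark.arrow ∧ m₁ = Mark.tail ∧ m₂ = Mark.tail)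
       ∨ (w.mk1 (ℓ-1) = Mark.tail ∧ w.mk2 (ℓ-1) = Mark.tail ∧ m₁ = Mark.arrow)))
    ∨ (r < n ∧
      ((w.vert r ∈ Z ∧ ¬(m₂ = Mark.arrow ∧ w.mk1 r = Mark.arrow))
       ∨ (m₂ = Mark.arrow ∧ w.mk1 r = Mark.arrow ∧ ¬ G.AncS (w.vert r) Z)
       ∨ (m₂ = Mark.arrow ∧ w.mk1 r = Mark.tail ∧ w.mk2 r = Mark.tail)
       ∨ (m₁ = Mark.tail ∧ m₂ = Mark.tail ∧ w.mk1 r = Mark.arrow))) := by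
  classical
  obtain ⟨hZ, hAnc, hPat⟩ := hopen
  set d := r - ℓ - 1 with hd
  set L := ℓ + 1 + (n - r) with hLdef
  set Q := spliceWalk w ℓ r hlr hrn he with hQ
  have hLn : L < n := by omega
  have hvle : ∀ i ≤ ℓ, Q.vert i = w.vert i := fun i hi => spliceWalk_vert_le hi
  have hvgt : ∀ i, ℓ < i → Q.vert i = w.vert (i + d) := fun i hi => spliceWalk_vert_gt hi
  have hvR : Q.vert (ℓ + 1) = w.vert r := by
    rw [hvgt (ℓ + 1) (by omega)]; congr 1; omega
  have hvend : Q.vert L = w.vert n := by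
    rw [hvgt L (by omega)]; congr 1; omega
  have hnot : ¬ Q.MOpen Z := by
    intro hop
    have := hmin L Q (spliceWalk_isPath hpath) (hvle 0 (Nat.zero_le ℓ)) hvend hop
    omega
  unfold MixedGraph.Walk.MOpen at hnot
  rw [not_and_or, not_and_or] at hnot
  rcases hnot with hv | hv | hv
  · -- a non-collider of Q is in Z
    push_neg at hv
    obtain ⟨k, hkL, hkcol, hkZ⟩ := hv
    rcases lt_trichotomy k ℓ with hk | hk | hk
    · exfalso
      rw [hvle k (le_of_lt hk)] at hkZ
      exact hZ k (by omega) (fun hc => hkcol ((spliceWalk_collider_lt hk).2 hc)) hkZ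
    · subst hk
      rcases Nat.eq_zero_or_pos k with h0 | h0
      · exfalso
        rw [hvle k le_rfl] at hkZ
        exact hZ k (by omega) (fun hc => by
          obtain ⟨hc0, -⟩ := hc
          omega) hkZ
      · left
        refine ⟨h0, Or.inl ⟨by rwa [hvle k le_rfl] at hkZ, fun hc =>
          hkcol ((spliceWalk_collider_at_left h0).2 hc)⟩⟩
    · rcases Nat.lt_or_ge k (ℓ + 2) with hk2 | hk2
      · -- k = ℓ + 1
        have hk1 : k = ℓ + 1 := by omega
        subst hk1
        rw [hvR] at hkZ
        rcases Nat.lt_or_ge r n with hr | hr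
        · right
          exact ⟨hr, Or.inl ⟨hkZ, fun hc =>
            hkcol (spliceWalk_collider_at_right.2 ⟨hr, hc⟩)⟩⟩
        · exfalso
          have hrn' : r = n := by omega
          rw [hrn'] at hkZ
          exact hZ n le_rfl (fun hc => by obtain ⟨-, hcn, -⟩ := hc; omega) hkZ
      · exfalso
        rcases Nat.lt_or_ge k L with hkL' | hkL'
        · rw [hvgt k (by omega)] at hkZ
          refine hZ (k + d) (by omega) (fun hc => ?_) hkZ
          exact hkcol ((spliceWalk_collider_gt (by omega)).2 ⟨hkL', hc⟩)
        · have : k = L := by omega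
          subst this
          rw [hvend] at hkZ
          exact hZ n le_rfl (fun hc => by obtain ⟨-, hcn, -⟩ := hc; omega) hkZ
  · -- a collider of Q is not an ancestor of Z
    push_neg at hv
    obtain ⟨k, hkcol, hkA⟩ := hv
    rcases lt_trichotomy k ℓ with hk | hk | hk
    · exfalso
      rw [hvle k (le_of_lt hk)] at hkA
      exact hkA (hAnc k ((spliceWalk_collider_lt hk).1 hkcol))
    · subst hk
      have h0 : 0 < k := hkcol.1
      rw [hvle k le_rfl] at hkA
      exact Or.inl ⟨h0, Or.inr (Or.inl ⟨((spliceWalk_collider_at_left h0).1 hkcol).1,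
        ((spliceWalk_collider_at_left h0).1 hkcol).2, hkA⟩)⟩
    · rcases Nat.lt_or_ge k (ℓ + 2) with hk2 | hk2
      · have hk1 : k = ℓ + 1 := by omega
        subst hk1
        obtain ⟨hr, ha, hb⟩ := spliceWalk_collider_at_right.1 hkcol
        rw [hvR] at hkA
        exact Or.inr ⟨hr, Or.inr (Or.inl ⟨ha, hb, hkA⟩)⟩
      · exfalso
        obtain ⟨hkL', hc⟩ := (spliceWalk_collider_gt (by omega : ℓ + 1 < k)).1 hkcol
        rw [hvgt k (by omega)] at hkA
        exact hkA (hAnc (k + d) hc)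
  · -- a forbidden pattern occurs on Q
    push_neg at hv
    obtain ⟨k, hk0, hkL, hkk⟩ := hv
    have hkk' : (Q.mk2 (k - 1) = Mark.arrow ∧ Q.mk1 k = Mark.tail ∧ Q.mk2 k = Mark.tail)
        ∨ (Q.mk1 (k - 1) = Mark.tail ∧ Q.mk2 (k - 1) = Mark.tail ∧ Q.mk1 k = Mark.arrow) := by
      by_cases hp : (Q.mk2 (k - 1) = Mark.arrow ∧ Q.mk1 k = Mark.tail ∧ Q.mk2 k = Mark.tail)
      · exact Or.inl hp
      · exact Or.inr (hkk (fun h1 h2 h3 => hp ⟨h1, h2, h3⟩))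
    clear hkk
    rcases lt_trichotomy k ℓ with hk | hk | hk
    · exfalso
      have e1 : Q.mk2 (k-1) = w.mk2 (k-1) := spliceWalk_mk2_lt (by omega)
      have e2 : Q.mk1 k = w.mk1 k := spliceWalk_mk1_lt hk
      have e3 : Q.mk2 k = w.mk2 k := spliceWalk_mk2_lt hk
      have e4 : Q.mk1 (k-1) = w.mk1 (k-1) := spliceWalk_mk1_lt (by omega)
      have := hPat k hk0 (by omega)
      rw [e1, e2, e3, e4] at hkk'
      rcases hkk' with h | h
      · exact this.1 h
      · exact this.2 h
    · subst hk
      have e1 : Q.mk2 (k-1) = w.mk2 (k-1) := spliceWalk_mk2_lt (by omega)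
      have e2 : Q.mk1 k = m₁ := spliceWalk_mk1_eq
      have e3 : Q.mk2 k = m₂ := spliceWalk_mk2_eq
      have e4 : Q.mk1 (k-1) = w.mk1 (k-1) := spliceWalk_mk1_lt (by omega)
      rw [e1, e2, e3, e4] at hkk'
      rcases hkk' with h | h
      · exact Or.inl ⟨hk0, Or.inr (Or.inr (Or.inl h))⟩
      · exact Or.inl ⟨hk0, Or.inr (Or.inr (Or.inr h))⟩
    · rcases Nat.lt_or_ge k (ℓ + 2) with hk2 | hk2
      · have hk1 : k = ℓ + 1 := by omega
        subst hk1
        have hr : r < n := by omega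
        have e1 : Q.mk2 (ℓ + 1 - 1) = m₂ := by
          rw [(by omega : ℓ + 1 - 1 = ℓ)]; exact spliceWalk_mk2_eq
        have e2 : Q.mk1 (ℓ + 1) = w.mk1 r := by
          rw [spliceWalk_mk1_gt (by omega), (by omega : ℓ + 1 + d = r)]
        have e3 : Q.mk2 (ℓ + 1) = w.mk2 r := by
          rw [spliceWalk_mk2_gt (by omega), (by omega : ℓ + 1 + d = r)]
        have e4 : Q.mk1 (ℓ + 1 - 1) = m₁ := by
          rw [(by omega : ℓ + 1 - 1 = ℓ)]; exact spliceWalk_mk1_eq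
        rw [e1, e2, e3, e4] at hkk'
        rcases hkk' with h | h
        · exact Or.inr ⟨hr, Or.inr (Or.inr (Or.inl h))⟩
        · exact Or.inr ⟨hr, Or.inr (Or.inr (Or.inr h))⟩
      · exfalso
        have e1 : Q.mk2 (k-1) = w.mk2 (k + d - 1) := by
          rw [spliceWalk_mk2_gt (by omega : ℓ < k - 1), (by omega : k - 1 + d = k + d - 1)]
        have e2 : Q.mk1 k = w.mk1 (k + d) := spliceWalk_mk1_gt (by omega)
        have e3 : Q.mk2 k = w.mk2 (k + d) := spliceWalk_mk2_gt (by omega)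
        have e4 : Q.mk1 (k-1) = w.mk1 (k + d - 1) := by
          rw [spliceWalk_mk1_gt (by omega : ℓ < k - 1), (by omega : k - 1 + d = k + d - 1)]
        have := hPat (k + d) (by omega) (by omega)
        rw [e1, e2, e3, e4] at hkk'
        rcases hkk' with h | h
        · exact this.1 h
        · exact this.2 h

end Block

section Intrinsic

open MixedGraph Mark MAux

variable {V : Type*} {G : MixedGraph V} {n : ℕ} {w : G.Walk n}

lemma walk_mk1_arrow_iff (hG : G.IsSigmaMAG) {i : ℕ} (hi : i < n) :
    w.mk1 i = Mark.arrow ↔ G.ArrowAt (w.vert i) (w.vert (i + 1)) :=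
  edgeMk_mk1_arrow_iff hG (w.valid i hi)

lemma walk_mk2_arrow_iff (hG : G.IsSigmaMAG) {i : ℕ} (hi : i < n) :
    w.mk2 i = Mark.arrow ↔ G.ArrowAt (w.vert (i + 1)) (w.vert i) :=
  edgeMk_mk2_arrow_iff hG (w.valid i hi)

lemma walk_mk1_tail_iff (hG : G.IsSigmaMAG) {i : ℕ} (hi : i < n) :
    w.mk1 i = Mark.tail ↔ G.TailAt (w.vert i) (w.vert (i + 1)) :=
  edgeMk_mk1_tail_iff hG (w.valid i hi)

lemma walk_mk2_tail_iff (hG : G.IsSigmaMAG) {i : ℕ} (hi : i < n) :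
    w.mk2 i = Mark.tail ↔ G.TailAt (w.vert (i + 1)) (w.vert i) :=
  edgeMk_mk2_tail_iff hG (w.valid i hi)

lemma walk_undir_iff (hG : G.IsSigmaMAG) {i : ℕ} (hi : i < n) :
    (w.mk1 i = Mark.tail ∧ w.mk2 i = Mark.tail) ↔ G.undir (w.vert i) (w.vert (i + 1)) :=
  edgeMk_undir_iff hG (w.valid i hi)

/-- Intrinsic characterization of colliders (interior positions). -/
lemma walk_collider_iff (hG : G.IsSigmaMAG) {k : ℕ} (hk0 : 0 < k) (hkn : k < n) :
    w.IsCollider k ↔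
      (G.ArrowAt (w.vert k) (w.vert (k - 1)) ∧ G.ArrowAt (w.vert k) (w.vert (k + 1))) := by
  unfold MixedGraph.Walk.IsCollider
  have h1 : w.mk2 (k - 1) = Mark.arrow ↔ G.ArrowAt (w.vert k) (w.vert (k - 1)) := by
    have := walk_mk2_arrow_iff (w := w) hG (i := k - 1) (by omega)
    rwa [(by omega : k - 1 + 1 = k)] at this
  have h2 := walk_mk1_arrow_iff (w := w) hG hkn
  constructor
  · rintro ⟨-, -, ha, hb⟩
    exact ⟨h1.1 ha, h2.1 hb⟩
  · rintro ⟨ha, hb⟩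
    exact ⟨hk0, hkn, h1.2 ha, h2.2 hb⟩

/-- Intrinsic version of the openness pattern condition. -/
lemma open_pattern₁ (hG : G.IsSigmaMAG) {Z : Set V} (hopen : w.MOpen Z) {k : ℕ}
    (hk0 : 0 < k) (hkn : k < n) (ha : G.ArrowAt (w.vert k) (w.vert (k - 1)))
    (hu : G.undir (w.vert k) (w.vert (k + 1))) : False := by
  refine (hopen.2.2 k hk0 hkn).1 ⟨?_, ?_, ?_⟩
  · have := walk_mk2_arrow_iff (w := w) hG (i := k - 1) (by omega)
    rw [(by omega : k - 1 + 1 = k)] at this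
    exact this.2 ha
  · exact ((walk_undir_iff hG hkn).2 hu).1
  · exact ((walk_undir_iff hG hkn).2 hu).2

lemma open_pattern₂ (hG : G.IsSigmaMAG) {Z : Set V} (hopen : w.MOpen Z) {k : ℕ}
    (hk0 : 0 < k) (hkn : k < n) (hu : G.undir (w.vert (k - 1)) (w.vert k))
    (ha : G.ArrowAt (w.vert k) (w.vert (k + 1))) : False := by
  refine (hopen.2.2 k hk0 hkn).2 ⟨?_, ?_, ?_⟩
  · have := walk_undir_iff (w := w) hG (i := k - 1) (by omega)
    rw [(by omega : k - 1 + 1 = k)] at this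
    exact (this.2 hu).1
  · have := walk_undir_iff (w := w) hG (i := k - 1) (by omega)
    rw [(by omega : k - 1 + 1 = k)] at this
    exact (this.2 hu).2
  · exact (walk_mk1_arrow_iff hG hkn).2 ha

/-- Fully intrinsic splice-block lemma. -/
lemma splice_block_intrinsic (hG : G.IsSigmaMAG) {Z : Set V}
    {ℓ r : ℕ} (hlr : ℓ + 2 ≤ r) (hrn : r ≤ n)
    (hadj : G.Adj (w.vert ℓ) (w.vert r))
    (hpath : w.IsPath) (hopen : w.MOpen Z)
    (hmin : ∀ (m : ℕ) (w' : G.Walk m), w'.IsPath → w'.vert 0 = w.vert 0 →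
      w'.vert m = w.vert n → w'.MOpen Z → n ≤ m) :
    (0 < ℓ ∧
      ((w.vert ℓ ∈ Z ∧
          ¬(G.ArrowAt (w.vert ℓ) (w.vert (ℓ-1)) ∧ G.ArrowAt (w.vert ℓ) (w.vert r)))
       ∨ (G.ArrowAt (w.vert ℓ) (w.vert (ℓ-1)) ∧ G.ArrowAt (w.vert ℓ) (w.vert r) ∧
          ¬ G.AncS (w.vert ℓ) Z)
       ∨ (G.ArrowAt (w.vert ℓ) (w.vert (ℓ-1)) ∧ G.undir (w.vert ℓ) (w.vert r))
       ∨ (G.undir (w.vert (ℓ-1)) (w.vert ℓ) ∧ G.ArrowAt (w.vert ℓ) (w.vert r))))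
    ∨ (r < n ∧
      ((w.vert r ∈ Z ∧
          ¬(G.ArrowAt (w.vert r) (w.vert ℓ) ∧ G.ArrowAt (w.vert r) (w.vert (r+1))))
       ∨ (G.ArrowAt (w.vert r) (w.vert ℓ) ∧ G.ArrowAt (w.vert r) (w.vert (r+1)) ∧
          ¬ G.AncS (w.vert r) Z)
       ∨ (G.ArrowAt (w.vert r) (w.vert ℓ) ∧ G.undir (w.vert r) (w.vert (r+1)))
       ∨ (G.undir (w.vert ℓ) (w.vert r) ∧ G.ArrowAt (w.vert r) (w.vert (r+1))))) := by
  obtain ⟨m₁, m₂, he⟩ := edgeMk_of_adj hadj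
  have hm1a : m₁ = Mark.arrow ↔ G.ArrowAt (w.vert ℓ) (w.vert r) := edgeMk_mk1_arrow_iff hG he
  have hm2a : m₂ = Mark.arrow ↔ G.ArrowAt (w.vert r) (w.vert ℓ) := edgeMk_mk2_arrow_iff hG he
  have hmu : (m₁ = Mark.tail ∧ m₂ = Mark.tail) ↔ G.undir (w.vert ℓ) (w.vert r) :=
    edgeMk_undir_iff hG he
  have hwa : ∀ k, 0 < k → k ≤ n →
      (w.mk2 (k-1) = Mark.arrow ↔ G.ArrowAt (w.vert k) (w.vert (k-1))) := by
    intro k h0 hn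
    have := walk_mk2_arrow_iff (w := w) hG (i := k - 1) (by omega)
    rwa [(by omega : k - 1 + 1 = k)] at this
  have hwu : ∀ k, 0 < k → k ≤ n →
      ((w.mk1 (k-1) = Mark.tail ∧ w.mk2 (k-1) = Mark.tail) ↔
        G.undir (w.vert (k-1)) (w.vert k)) := by
    intro k h0 hn
    have := walk_undir_iff (w := w) hG (i := k - 1) (by omega)
    rwa [(by omega : k - 1 + 1 = k)] at this
  rcases splice_block hlr hrn he hpath hopen hmin with ⟨hl0, hb⟩ | ⟨hrn', hb⟩
  · left
    refine ⟨hl0, ?_⟩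
    rcases hb with ⟨h1, h2⟩ | ⟨h1, h2, h3⟩ | ⟨h1, h2, h3⟩ | ⟨h1, h2, h3⟩
    · exact Or.inl ⟨h1, fun ⟨ha, hb'⟩ =>
        h2 ⟨(hwa ℓ hl0 (by omega)).2 ha, hm1a.2 hb'⟩⟩
    · exact Or.inr (Or.inl ⟨(hwa ℓ hl0 (by omega)).1 h1, hm1a.1 h2, h3⟩)
    · exact Or.inr (Or.inr (Or.inl ⟨(hwa ℓ hl0 (by omega)).1 h1, hmu.1 ⟨h2, h3⟩⟩))
    · exact Or.inr (Or.inr (Or.inr ⟨(hwu ℓ hl0 (by omega)).1 ⟨h1, h2⟩, hm1a.1 h3⟩))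
  · right
    refine ⟨hrn', ?_⟩
    have hra := walk_mk1_arrow_iff (w := w) hG (i := r) hrn'
    have hru := walk_undir_iff (w := w) hG (i := r) hrn'
    rcases hb with ⟨h1, h2⟩ | ⟨h1, h2, h3⟩ | ⟨h1, h2, h3⟩ | ⟨h1, h2, h3⟩
    · exact Or.inl ⟨h1, fun ⟨ha, hb'⟩ => h2 ⟨hm2a.2 ha, hra.2 hb'⟩⟩
    · exact Or.inr (Or.inl ⟨hm2a.1 h1, hra.1 h2, h3⟩)
    · exact Or.inr (Or.inr (Or.inl ⟨hm2a.1 h1, hru.1 ⟨h2, h3⟩⟩))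
    · exact Or.inr (Or.inr (Or.inr ⟨hmu.1 ⟨h1, h2⟩, hra.1 h3⟩))

end Intrinsic

section Descent

open MixedGraph Mark MAux

variable {V : Type*} {G : MixedGraph V}

/-- The nodes strictly between `ℓ` and `k` are colliders in `Z` that are parents of
`w.vert (k+1)`. -/
def LeftChain {n : ℕ} (w : G.Walk n) (Z : Set V) (k ℓ : ℕ) : Prop :=
  ∀ j, ℓ < j → j < k → w.IsCollider j ∧ w.vert j ∈ Z ∧ G.dir (w.vert j) (w.vert (k + 1))

variable {n : ℕ} {w : G.Walk n} {Z : Set V}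

lemma col_arrow_left (hG : G.IsSigmaMAG) {j : ℕ} (hc : w.IsCollider j) :
    G.ArrowAt (w.vert j) (w.vert (j - 1)) :=
  ((walk_collider_iff hG hc.1 hc.2.1).1 hc).1

lemma col_arrow_right (hG : G.IsSigmaMAG) {j : ℕ} (hc : w.IsCollider j) :
    G.ArrowAt (w.vert j) (w.vert (j + 1)) :=
  ((walk_collider_iff hG hc.1 hc.2.1).1 hc).2

lemma walk_adj {i : ℕ} (hi : i < n) : G.Adj (w.vert i) (w.vert (i + 1)) :=
  adj_of_edgeMk (w.valid i hi)

lemma walk_tail_of_not_arrow (hG : G.IsSigmaMAG) {i : ℕ} (hi : i < n)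
    (h : ¬ G.ArrowAt (w.vert i) (w.vert (i + 1))) : G.TailAt (w.vert i) (w.vert (i + 1)) :=
  ((arrowAt_or_tailAt hG (walk_adj hi)).resolve_left h)

lemma walk_tail_of_not_arrow' (hG : G.IsSigmaMAG) {i : ℕ} (hi : i < n)
    (h : ¬ G.ArrowAt (w.vert (i + 1)) (w.vert i)) : G.TailAt (w.vert (i + 1)) (w.vert i) :=
  ((arrowAt_or_tailAt hG (adj_symm (walk_adj hi))).resolve_left h)

lemma not_collider_mem (hopen : w.MOpen Z) {j : ℕ} (hj : j ≤ n) (hmem : w.vert j ∈ Z) :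
    w.IsCollider j := by
  by_contra hc
  exact hopen.1 j hj hc hmem

/-- The clean leftward descent: given a left chain below `k` with anchor `w.vert (k+1)`,
it can be extended until a node not adjacent to the anchor is found. -/
lemma descent (hG : G.IsSigmaMAG)
    (hpath : w.IsPath) (hopen : w.MOpen Z)
    (hmin : ∀ (m : ℕ) (w' : G.Walk m), w'.IsPath → w'.vert 0 = w.vert 0 →
      w'.vert m = w.vert n → w'.MOpen Z → n ≤ m)
    {k : ℕ} (hk2 : 2 ≤ k) (hkn : k + 1 ≤ n) :
    ∀ ℓ, ℓ + 2 ≤ k → LeftChain w Z k ℓ →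
      ∃ i, i + 2 ≤ k ∧ ¬ G.Adj (w.vert i) (w.vert (k + 1)) ∧ LeftChain w Z k i := by
  intro ℓ
  induction ℓ using Nat.strong_induction_on with
  | _ ℓ ih =>
    intro hℓk hchain
    by_cases hadj : G.Adj (w.vert ℓ) (w.vert (k + 1))
    swap
    · exact ⟨ℓ, hℓk, hadj, hchain⟩
    -- chain facts at ℓ + 1 and k - 1
    obtain ⟨hcol1, hmem1, hdir1⟩ := hchain (ℓ + 1) (by omega) (by omega)
    obtain ⟨hcolk, hmemk, hdirk⟩ := hchain (k - 1) (by omega) (by omega)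
    -- the splice
    rcases splice_block_intrinsic (ℓ := ℓ) (r := k + 1) hG (by omega) hkn hadj hpath hopen hmin
      with ⟨hl0, hb⟩ | ⟨hrn', hb⟩
    · -- blockage at the left frontier
      rcases hb with ⟨h1, h2⟩ | ⟨h1, h2, h3⟩ | ⟨h1, h2⟩ | ⟨h1, h2⟩
      · -- vert ℓ ∈ Z, not a splice collider
        have hcol : w.IsCollider ℓ := not_collider_mem hopen (by omega) h1
        have hal : G.ArrowAt (w.vert ℓ) (w.vert (ℓ - 1)) := col_arrow_left hG hcol
        have htl : ¬ G.ArrowAt (w.vert ℓ) (w.vert (k + 1)) := fun ha => h2 ⟨hal, ha⟩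
        rcases (arrowAt_or_tailAt hG hadj).resolve_left htl with hdir | hundir
        · -- the chain extends
          have hchain' : LeftChain w Z k (ℓ - 1) := by
            intro j hj1 hj2
            rcases Nat.lt_or_ge ℓ j with h | h
            · exact hchain j h hj2
            · have : j = ℓ := by omega
              subst this
              exact ⟨hcol, h1, hdir⟩
          exact ih (ℓ - 1) (by omega) (by omega) hchain'
        · -- undirected chord: killed by ancestrality via the next chain node
          exact absurd (col_arrow_left hG hcol1) (fun ha => by
            have ha' : G.ArrowAt (w.vert (ℓ + 1)) (w.vert (ℓ + 1 - 1)) := ha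
            exact kill2 hG (Or.inl hdir1)
              (Or.inr (G.undir_symm _ _ hundir))
              (by rwa [(by omega : ℓ + 1 - 1 = ℓ)] at ha'))
      · -- splice collider not ancestor of Z
        exfalso
        have hncol : ¬ w.IsCollider ℓ := fun hc => h3 (hopen.2.1 ℓ hc)
        have htl : ¬ G.ArrowAt (w.vert ℓ) (w.vert (ℓ + 1)) := fun ha =>
          hncol ((walk_collider_iff hG hl0 (by omega)).2 ⟨h1, ha⟩)
        rcases walk_tail_of_not_arrow hG (by omega) htl with hdir | hundir
        · exact h3 (ancS_of_dir hdir (ancS_of_mem hmem1))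
        · exact open_pattern₁ hG hopen hl0 (by omega) h1 hundir
      · -- arrow into vert ℓ on π plus undirected chord: ancestral kill
        exfalso
        refine kill2 hG (Or.inl hdir1) (Or.inr (G.undir_symm _ _ h2)) ?_
        have := col_arrow_left hG hcol1
        rwa [(by omega : ℓ + 1 - 1 = ℓ)] at this
      · -- undirected π-edge into vert ℓ plus arrow at vert ℓ on chord
        exfalso
        have hpat : ¬ G.ArrowAt (w.vert ℓ) (w.vert (ℓ + 1)) := fun ha =>
          open_pattern₂ hG hopen hl0 (by omega) h1 ha
        rcases walk_tail_of_not_arrow hG (by omega) hpat with hdir | hundir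
        · exact kill2 hG (Or.inl hdir) (Or.inl hdir1) h2
        · refine kill1 hG (Or.inr (G.undir_symm _ _ hundir)) ?_
          have := col_arrow_left hG hcol1
          rwa [(by omega : ℓ + 1 - 1 = ℓ)] at this
    · -- blockage at the anchor: always killed
      exfalso
      have hcolk' : G.ArrowAt (w.vert (k - 1)) (w.vert k) := by
        have := col_arrow_right hG hcolk
        rwa [(by omega : k - 1 + 1 = k)] at this
      have htailk : G.TailAt (w.vert (k - 1)) (w.vert (k + 1)) := Or.inl hdirk
      -- a tail at the anchor towards vert k is impossible
      have hkillk : ¬ G.TailAt (w.vert (k + 1)) (w.vert k) := fun ht =>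
        kill2 hG htailk ht hcolk'
      -- a tail at the anchor towards vert ℓ is impossible
      have hkillℓ : ¬ G.TailAt (w.vert (k + 1)) (w.vert ℓ) := fun ht =>
        kill2 hG (Or.inl hdir1) ht (by
          have := col_arrow_left hG hcol1
          rwa [(by omega : ℓ + 1 - 1 = ℓ)] at this)
      rcases hb with ⟨h1, h2⟩ | ⟨h1, h2, h3⟩ | ⟨h1, h2⟩ | ⟨h1, h2⟩
      · -- anchor in Z, not splice collider
        have hcol : w.IsCollider (k + 1) := not_collider_mem hopen (by omega) h1
        have har := col_arrow_right hG hcol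
        have hal := col_arrow_left hG hcol
        refine hkillℓ ((arrowAt_or_tailAt hG (adj_symm hadj)).resolve_left ?_)
        intro ha
        exact h2 ⟨ha, by rwa [(by omega : k + 1 + 1 = k + 2)] at har⟩
      · -- splice collider at anchor, not ancestor of Z
        have hncol : ¬ w.IsCollider (k + 1) := fun hc => h3 (hopen.2.1 (k + 1) hc)
        have hta : ¬ G.ArrowAt (w.vert (k + 1)) (w.vert k) := fun ha =>
          hncol ((walk_collider_iff hG (by omega) (by omega)).2
            ⟨by rwa [(by omega : k + 1 - 1 = k)], h2⟩)
        exact hkillk (walk_tail_of_not_arrow' hG (by omega) hta)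
      · -- arrow at anchor on chord plus undirected π-edge after the anchor
        have hta : ¬ G.ArrowAt (w.vert (k + 1)) (w.vert k) := fun ha =>
          open_pattern₁ hG hopen (k := k + 1) (by omega) (by omega)
            (by rwa [(by omega : k + 1 - 1 = k)]) h2
        exact hkillk (walk_tail_of_not_arrow' hG (by omega) hta)
      · -- undirected chord
        exact hkillℓ (Or.inr (G.undir_symm _ _ h1))

end Descent

section Reversal

open MixedGraph Mark MAux

variable {V : Type*} {G : MixedGraph V} {n : ℕ} {w : G.Walk n}

lemma reverse_vert (k : ℕ) : w.reverse.vert k = w.vert (n - k) := rfl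

lemma reverse_mk1 (k : ℕ) : w.reverse.mk1 k = w.mk2 (n - 1 - k) := rfl

lemma reverse_mk2 (k : ℕ) : w.reverse.mk2 k = w.mk1 (n - 1 - k) := rfl

lemma reverse_isPath (hpath : w.IsPath) : w.reverse.IsPath := by
  intro i j hi hj hv
  rw [reverse_vert, reverse_vert] at hv
  have := hpath _ _ (by omega) (by omega) hv
  omega

lemma reverse_collider_iff {k : ℕ} :
    w.reverse.IsCollider k ↔ (k ≤ n ∧ w.IsCollider (n - k)) := by
  unfold MixedGraph.Walk.IsCollider
  rw [reverse_mk2, reverse_mk1]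
  constructor
  · rintro ⟨h0, hn, ha, hb⟩
    refine ⟨by omega, by omega, by omega, ?_, ?_⟩
    · rwa [(by omega : n - 1 - k = n - k - 1)] at hb
    · rwa [(by omega : n - 1 - (k - 1) = n - k)] at ha
  · rintro ⟨hkn, h0, hn, ha, hb⟩
    refine ⟨by omega, by omega, ?_, ?_⟩
    · rwa [(by omega : n - 1 - (k - 1) = n - k)]
    · rwa [(by omega : n - 1 - k = n - k - 1)]

lemma reverse_mOpen {Z : Set V} (hopen : w.MOpen Z) : w.reverse.MOpen Z := by
  obtain ⟨hZ, hA, hP⟩ := hopen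
  refine ⟨?_, ?_, ?_⟩
  · intro k hk hc
    rw [reverse_vert]
    exact hZ (n - k) (by omega) (fun hcc => hc (reverse_collider_iff.2 ⟨hk, hcc⟩))
  · intro k hc
    obtain ⟨hkn, hcc⟩ := reverse_collider_iff.1 hc
    rw [reverse_vert]
    exact hA (n - k) hcc
  · intro k hk0 hkn
    rw [reverse_mk1, reverse_mk2, reverse_mk2, reverse_mk1,
      (by omega : n - 1 - (k - 1) = n - k), (by omega : n - 1 - k = n - k - 1)]
    have := hP (n - k) (by omega) (by omega)
    rw [(by omega : n - k - 1 = (n - k) - 1)]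
    constructor
    · rintro ⟨h1, h2, h3⟩
      exact this.2 ⟨h3, h2, h1⟩
    · rintro ⟨h1, h2, h3⟩
      exact this.1 ⟨h3, h2, h1⟩

lemma reverse_min {Z : Set V}
    (hmin : ∀ (m : ℕ) (w' : G.Walk m), w'.IsPath → w'.vert 0 = w.vert 0 →
      w'.vert m = w.vert n → w'.MOpen Z → n ≤ m) :
    ∀ (m : ℕ) (w' : G.Walk m), w'.IsPath → w'.vert 0 = w.reverse.vert 0 →
      w'.vert m = w.reverse.vert n → w'.MOpen Z → n ≤ m := by
  intro m w' hp h0 hm hop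
  refine hmin m w'.reverse (reverse_isPath hp) ?_ ?_ (reverse_mOpen hop)
  · rw [reverse_vert, Nat.sub_zero, hm, reverse_vert, Nat.sub_self]
  · rw [reverse_vert, Nat.sub_self, h0, reverse_vert, Nat.sub_zero]

end Reversal

section Slide

open MixedGraph Mark MAux

variable {V : Type*} {G : MixedGraph V}

/-- The trivial anterior path. -/
lemma anterior_refl (x : V) : G.AnteriorPath x x := by
  refine ⟨0, ⟨fun _ => x, fun _ => Mark.tail, fun _ => Mark.tail, fun i hi => by omega⟩,
    ?_, rfl, rfl, fun i hi => by omega⟩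
  intro i j hi hj _
  omega

lemma anterior_snoc_tailAt {x y z : V} (hxy : G.AnteriorPath x y) (h : G.TailAt y z) :
    G.AnteriorPath x z := by
  obtain ⟨m, wxy, -, h0, hm, htl⟩ := hxy
  obtain ⟨m₂, he⟩ : ∃ m₂, G.EdgeMk y z Mark.tail m₂ := by
    rcases h with h | h
    · exact ⟨Mark.arrow, h⟩
    · exact ⟨Mark.tail, h⟩
  have hseam : (walkSingle he).vert 0 = wxy.vert m := by simp [walkSingle, hm]
  have := anteriorPath_of_walk (walkAppend wxy (walkSingle he) hseam) (by
    intro i hi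
    by_cases hI : i < m
    · simp only [walkAppend, if_pos hI]
      exact htl i hI
    · simp [walkAppend, if_neg hI, walkSingle])
  rw [walkAppend_vert0, walkAppend_vertEnd, h0] at this
  simpa [walkSingle] using this

variable {n : ℕ} {w : G.Walk n}

/-- Anterior path downward along an undirected segment. -/
lemma seg_anterior_down {t r : ℕ} (htr : t ≤ r)
    (hseg : ∀ j, t ≤ j → j < r → G.undir (w.vert j) (w.vert (j+1))) :
    G.AnteriorPath (w.vert r) (w.vert t) := by
  induction r with
  | zero =>
    have : t = 0 := by omega
    subst this
    exact anterior_refl _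
  | succ r ih =>
    rcases Nat.lt_or_ge t (r+1) with h | h
    · refine anterior_cons_tailAt (Or.inr (G.undir_symm _ _ (hseg r (by omega) (by omega)))) ?_
      exact ih (by omega) (fun j h1 h2 => hseg j h1 (by omega))
    · have : t = r + 1 := by omega
      subst this
      exact anterior_refl _

/-- Anterior path upward along an undirected segment. -/
lemma seg_anterior_up {t r : ℕ} (htr : t ≤ r)
    (hseg : ∀ j, t ≤ j → j < r → G.undir (w.vert j) (w.vert (j+1))) :
    G.AnteriorPath (w.vert t) (w.vert r) := by
  induction r with
  | zero =>
    have : t = 0 := by omega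
    subst this
    exact anterior_refl _
  | succ r ih =>
    rcases Nat.lt_or_ge t (r+1) with h | h
    · refine anterior_snoc_tailAt (ih (by omega) (fun j h1 h2 => hseg j h1 (by omega)))
        (Or.inr (hseg r (by omega) (by omega)))
    · have : t = r + 1 := by omega
      subst this
      exact anterior_refl _

/-- The two-sided slide lemma along undirected segments. -/
lemma dslide2 (hG : G.IsSigmaMAG) {Z : Set V}
    (hpath : w.IsPath) (hopen : w.MOpen Z)
    (hmin : ∀ (m : ℕ) (w' : G.Walk m), w'.IsPath → w'.vert 0 = w.vert 0 →
      w'.vert m = w.vert n → w'.MOpen Z → n ≤ m)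
    {tL tR : ℕ} (htt : tL + 2 ≤ tR) (htn : tR ≤ n)
    (hLa : ∀ r, tR ≤ r → r ≤ n →
      (∀ j, tR ≤ j → j < r → G.undir (w.vert j) (w.vert (j+1))) →
      G.Adj (w.vert tL) (w.vert r) → 0 < tL →
      ((w.vert tL ∈ Z ∧
          ¬(G.ArrowAt (w.vert tL) (w.vert (tL-1)) ∧ G.ArrowAt (w.vert tL) (w.vert r)))
       ∨ (G.ArrowAt (w.vert tL) (w.vert (tL-1)) ∧ G.ArrowAt (w.vert tL) (w.vert r) ∧
          ¬ G.AncS (w.vert tL) Z)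
       ∨ (G.ArrowAt (w.vert tL) (w.vert (tL-1)) ∧ G.undir (w.vert tL) (w.vert r))
       ∨ (G.undir (w.vert (tL-1)) (w.vert tL) ∧ G.ArrowAt (w.vert tL) (w.vert r))) →
      (1 ≤ tL ∧ G.undir (w.vert (tL-1)) (w.vert tL) ∧ G.Adj (w.vert (tL-1)) (w.vert r)))
    (hRa : ∀ ℓ, ℓ ≤ tL →
      (∀ j, ℓ ≤ j → j < tL → G.undir (w.vert j) (w.vert (j+1))) →
      G.Adj (w.vert ℓ) (w.vert tR) → tR < n →
      ((w.vert tR ∈ Z ∧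
          ¬(G.ArrowAt (w.vert tR) (w.vert ℓ) ∧ G.ArrowAt (w.vert tR) (w.vert (tR+1))))
       ∨ (G.ArrowAt (w.vert tR) (w.vert ℓ) ∧ G.ArrowAt (w.vert tR) (w.vert (tR+1)) ∧
          ¬ G.AncS (w.vert tR) Z)
       ∨ (G.ArrowAt (w.vert tR) (w.vert ℓ) ∧ G.undir (w.vert tR) (w.vert (tR+1)))
       ∨ (G.undir (w.vert ℓ) (w.vert tR) ∧ G.ArrowAt (w.vert tR) (w.vert (tR+1)))) →
      (tR + 1 ≤ n ∧ G.undir (w.vert tR) (w.vert (tR+1)) ∧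
        G.Adj (w.vert ℓ) (w.vert (tR+1)))) :
    ∀ ℓ r, ℓ ≤ tL → tR ≤ r → r ≤ n →
      (∀ j, ℓ ≤ j → j < tL → G.undir (w.vert j) (w.vert (j+1))) →
      (∀ j, tR ≤ j → j < r → G.undir (w.vert j) (w.vert (j+1))) →
      G.Adj (w.vert ℓ) (w.vert r) → False := by
  have main : ∀ μ ℓ r, ℓ + (n - r) ≤ μ → ℓ ≤ tL → tR ≤ r → r ≤ n →
      (∀ j, ℓ ≤ j → j < tL → G.undir (w.vert j) (w.vert (j+1))) →
      (∀ j, tR ≤ j → j < r → G.undir (w.vert j) (w.vert (j+1))) →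
      G.Adj (w.vert ℓ) (w.vert r) → False := by
    intro μ
    induction μ using Nat.strong_induction_on with
    | _ μ ih =>
      intro ℓ r hμ hℓt htr hrn hLSeg hRSeg hadj
      rcases splice_block_intrinsic (ℓ := ℓ) (r := r) hG (by omega) hrn hadj hpath hopen hmin
        with ⟨hl0, hb⟩ | ⟨hrn', hb⟩
      · by_cases hℓtt : ℓ = tL
        · subst hℓtt
          obtain ⟨h1, h2, h3⟩ := hLa r htr hrn hRSeg hadj hl0 hb
          refine ih (μ - 1) (by omega) (ℓ - 1) r (by omega) (by omega) htr hrn ?_ hRSeg h3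
          intro j hj1 hj2
          have hj : j = ℓ - 1 := by omega
          subst hj
          have he : ℓ - 1 + 1 = ℓ := by omega
          rw [he]
          exact h2
        · have hℓlt : ℓ < tL := by omega
          have hund : G.undir (w.vert ℓ) (w.vert (ℓ+1)) := hLSeg ℓ le_rfl hℓlt
          rcases hb with ⟨h1, h2⟩ | ⟨h1, h2, h3⟩ | ⟨h1, h2⟩ | ⟨h1, h2⟩
          · have hcol := not_collider_mem hopen (by omega) h1
            exact kill1 hG (Or.inr hund) (col_arrow_right hG hcol)
          · exact open_pattern₁ hG hopen hl0 (by omega) h1 hund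
          · exact open_pattern₁ hG hopen hl0 (by omega) h1 hund
          · have hadj' := hG.sigma_complete₁ (w.vert r) (w.vert ℓ) (w.vert (ℓ-1)) h2
              (G.undir_symm _ _ h1)
            exact ih (μ - 1) (by omega) (ℓ - 1) r (by omega) (by omega) htr hrn
              (by
                intro j hj1 hj2
                rcases Nat.lt_or_ge j ℓ with h | h
                · have hj : j = ℓ - 1 := by omega
                  subst hj
                  have he : ℓ - 1 + 1 = ℓ := by omega
                  rw [he]
                  exact h1
                · exact hLSeg j (by omega) hj2)
              hRSeg (adj_symm hadj')
      · by_cases hrtt : r = tR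
        · subst hrtt
          obtain ⟨h1, h2, h3⟩ := hRa ℓ hℓt hLSeg hadj hrn' hb
          refine ih (μ - 1) (by omega) ℓ (r + 1) (by omega) hℓt (by omega) h1 hLSeg ?_ h3
          intro j hj1 hj2
          have hj : j = r := by omega
          subst hj
          exact h2
        · have hrgt : tR < r := by omega
          have hund : G.undir (w.vert (r-1)) (w.vert r) := by
            have := hRSeg (r-1) (by omega) (by omega)
            rwa [(by omega : r - 1 + 1 = r)] at this
          rcases hb with ⟨h1, h2⟩ | ⟨h1, h2, h3⟩ | ⟨h1, h2⟩ | ⟨h1, h2⟩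
          · have hcol := not_collider_mem hopen (by omega) h1
            have := col_arrow_left hG hcol
            exact kill1 hG (Or.inr (G.undir_symm _ _ hund)) this
          · exact open_pattern₂ hG hopen (k := r) (by omega) hrn' hund h2
          · have hadj' := hG.sigma_complete₁ (w.vert ℓ) (w.vert r) (w.vert (r+1)) h1 h2
            exact ih (μ - 1) (by omega) ℓ (r + 1) (by omega) hℓt (by omega) (by omega)
              hLSeg
              (by
                intro j hj1 hj2
                rcases Nat.lt_or_ge j r with h | h
                · exact hRSeg j hj1 h
                · have : j = r := by omega
                  rw [this]
                  exact h2)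
              hadj'
          · exact open_pattern₂ hG hopen (k := r) (by omega) hrn' hund h2
  intro ℓ r h1 h2 h3 h4 h5 h6
  exact main (ℓ + (n - r)) ℓ r le_rfl h1 h2 h3 h4 h5 h6

end Slide

section Seed

open MixedGraph Mark MAux

variable {V : Type*} {G : MixedGraph V} {n : ℕ} {w : G.Walk n} {Z : Set V}

/-- Kill of the configuration: arrowhead into `v_{k-1}` from the left, undirected
shield edge. -/
lemma ukill (hG : G.IsSigmaMAG) (hpath : w.IsPath) (hopen : w.MOpen Z)
    (hmin : ∀ (m : ℕ) (w' : G.Walk m), w'.IsPath → w'.vert 0 = w.vert 0 →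
      w'.vert m = w.vert n → w'.MOpen Z → n ≤ m)
    {k : ℕ} (hk2 : 2 ≤ k) (hkn : k + 1 ≤ n)
    (hβ : G.ArrowAt (w.vert (k-1)) (w.vert (k-2)))
    (hu : G.undir (w.vert (k-1)) (w.vert (k+1))) : False := by
  have htailac : G.TailAt (w.vert (k-1)) (w.vert (k+1)) := Or.inr hu
  have htailca : G.TailAt (w.vert (k+1)) (w.vert (k-1)) := Or.inr (G.undir_symm _ _ hu)
  have hadjpc : G.Adj (w.vert (k-2)) (w.vert (k+1)) :=
    hG.sigma_complete₁ (w.vert (k-2)) (w.vert (k-1)) (w.vert (k+1)) hβ hu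
  refine dslide2 hG hpath hopen hmin (tL := k-2) (tR := k+1) (by omega) hkn
    ?_ ?_ (k-2) (k+1) le_rfl le_rfl hkn (by omega) (by omega) hadjpc
  · -- left anchor kills
    intro r htr hrn hRSeg hadj hl0 hb
    exfalso
    have hantDown : G.AnteriorPath (w.vert r) (w.vert (k+1)) := seg_anterior_down htr hRSeg
    have hantUp : G.AnteriorPath (w.vert (k+1)) (w.vert r) := seg_anterior_up htr hRSeg
    have hANT1 : G.AnteriorPath (w.vert r) (w.vert (k-1)) :=
      anterior_snoc_tailAt hantDown htailca
    have hANT2 : G.AnteriorPath (w.vert (k-1)) (w.vert r) :=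
      anterior_cons_tailAt htailac hantUp
    rcases hb with ⟨h1, h2⟩ | ⟨h1, h2, h3⟩ | ⟨h1, h2⟩ | ⟨h1, h2⟩
    · have hcol := not_collider_mem hopen (by omega) h1
      have haL := col_arrow_left hG hcol
      have hnag : ¬ G.ArrowAt (w.vert (k-2)) (w.vert r) := fun ha => h2 ⟨haL, ha⟩
      have htail := (arrowAt_or_tailAt hG hadj).resolve_left hnag
      have hANT : G.AnteriorPath (w.vert (k-2)) (w.vert (k-1)) :=
        anterior_cons_tailAt htail hANT1
      have harr := col_arrow_right hG hcol
      rw [(by omega : k - 2 + 1 = k - 1)] at harr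
      exact hG.ancestral _ _ hANT harr
    · by_cases hcol : w.IsCollider (k-2)
      · exact h3 (hopen.2.1 _ hcol)
      · have hnar : ¬ G.ArrowAt (w.vert (k-2)) (w.vert (k-2+1)) := fun ha =>
          hcol ((walk_collider_iff hG (k := k-2) hl0 (by omega)).2
            ⟨h1, ha⟩)
        rcases walk_tail_of_not_arrow (w := w) hG (i := k-2) (by omega) hnar with hd | hun
        · rw [(by omega : k - 2 + 1 = k - 1)] at hd
          have hANTp : G.AnteriorPath (w.vert (k-2)) (w.vert r) :=
            anterior_cons_tailAt (Or.inl hd) hANT2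
          exact hG.ancestral _ _ hANTp h2
        · exact open_pattern₁ hG hopen (k := k-2) hl0 (by omega) h1 hun
    · have hANT' : G.AnteriorPath (w.vert (k-1)) (w.vert (k-2)) :=
        anterior_snoc_tailAt hANT2 (Or.inr (G.undir_symm _ _ h2))
      exact hG.ancestral _ _ hANT' hβ
    · have hnar : ¬ G.ArrowAt (w.vert (k-2)) (w.vert (k-2+1)) := fun ha =>
        open_pattern₂ hG hopen (k := k-2) hl0 (by omega) h1 ha
      rcases walk_tail_of_not_arrow (w := w) hG (i := k-2) (by omega) hnar with hd | hun
      · rw [(by omega : k - 2 + 1 = k - 1)] at hd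
        have hANTp : G.AnteriorPath (w.vert (k-2)) (w.vert r) :=
          anterior_cons_tailAt (Or.inl hd) hANT2
        exact hG.ancestral _ _ hANTp h2
      · rw [(by omega : k - 2 + 1 = k - 1)] at hun
        exact kill1 hG (Or.inr (G.undir_symm _ _ hun)) hβ
  · -- right anchor: kill or step
    intro ℓ hℓt hLSeg hadj hrn' hb
    have hsegUp : G.AnteriorPath (w.vert ℓ) (w.vert (k-2)) := seg_anterior_up hℓt hLSeg
    have hKillTail : G.TailAt (w.vert (k+1)) (w.vert ℓ) → False := by
      intro htc
      have hANT : G.AnteriorPath (w.vert (k-1)) (w.vert (k-2)) :=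
        anterior_cons_tailAt htailac (anterior_cons_tailAt htc hsegUp)
      exact hG.ancestral _ _ hANT hβ
    rcases hb with ⟨h1, h2⟩ | ⟨h1, h2, h3⟩ | ⟨h1, h2⟩ | ⟨h1, h2⟩
    · exfalso
      have hcolc := not_collider_mem hopen (by omega) h1
      have harrR := col_arrow_right hG hcolc
      have hnal : ¬ G.ArrowAt (w.vert (k+1)) (w.vert ℓ) := fun ha => h2 ⟨ha, harrR⟩
      exact hKillTail ((arrowAt_or_tailAt hG (adj_symm hadj)).resolve_left hnal)
    · exfalso
      by_cases hcolc : w.IsCollider (k+1)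
      · exact h3 (hopen.2.1 _ hcolc)
      · have hnab : ¬ G.ArrowAt (w.vert (k+1)) (w.vert k) := fun ha =>
          hcolc ((walk_collider_iff hG (k := k+1) (by omega) hrn').2
            ⟨by rwa [(by omega : k + 1 - 1 = k)], h2⟩)
        rcases walk_tail_of_not_arrow' (w := w) hG (i := k) (by omega) hnab with hd | hun
        · by_cases hcolk : w.IsCollider k
          · exact h3 (ancS_of_dir hd (hopen.2.1 _ hcolk))
          · have harrkb : G.ArrowAt (w.vert k) (w.vert (k+1)) := Or.inl hd
            have hnka : ¬ G.ArrowAt (w.vert k) (w.vert (k-1)) := fun ha =>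
              hcolk ((walk_collider_iff hG (k := k) (by omega) (by omega)).2 ⟨ha, harrkb⟩)
            have htk : G.TailAt (w.vert k) (w.vert (k-1)) := by
              have := walk_tail_of_not_arrow' (w := w) hG (i := k-1) (by omega)
                (by rw [(by omega : k - 1 + 1 = k)]; exact hnka)
              rwa [(by omega : k - 1 + 1 = k)] at this
            rcases htk with hd2 | hun2
            · have hANTp : G.AnteriorPath (w.vert k) (w.vert (k+1)) :=
                anterior_cons_tailAt (Or.inl hd2) (anterior_of_tailAt htailac)
              exact hG.ancestral _ _ hANTp harrkb
            · exact open_pattern₂ hG hopen (k := k) (by omega) (by omega)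
                (G.undir_symm _ _ hun2) harrkb
        · exact open_pattern₂ hG hopen (k := k+1) (by omega) hrn'
            (by rw [(by omega : k + 1 - 1 = k)]; exact G.undir_symm _ _ hun) h2
    · exact ⟨by omega, h2,
        hG.sigma_complete₁ (w.vert ℓ) (w.vert (k+1)) (w.vert (k+1+1)) h1 h2⟩
    · exact absurd (Or.inr (G.undir_symm _ _ h1) : G.TailAt (w.vert (k+1)) (w.vert ℓ))
        (fun h => hKillTail h)


/-- Kill of the configuration: undirected edge before `v_{k-1}`, arrowhead at `v_{k-1}`
on the shield edge. -/
lemma p2kill (hG : G.IsSigmaMAG) (hpath : w.IsPath) (hopen : w.MOpen Z)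
    (hmin : ∀ (m : ℕ) (w' : G.Walk m), w'.IsPath → w'.vert 0 = w.vert 0 →
      w'.vert m = w.vert n → w'.MOpen Z → n ≤ m)
    {k : ℕ} (hk2 : 2 ≤ k) (hkn : k + 1 ≤ n)
    (hu2 : G.undir (w.vert (k-2)) (w.vert (k-1)))
    (hac : G.ArrowAt (w.vert (k-1)) (w.vert (k+1))) : False := by
  have hu2' : G.undir (w.vert (k-1-1)) (w.vert (k-1)) := by
    rw [(by omega : k - 1 - 1 = k - 2)]
    exact hu2
  have hnab : ¬ G.ArrowAt (w.vert (k-1)) (w.vert (k-1+1)) := fun ha =>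
    open_pattern₂ hG hopen (k := k-1) (by omega) (by omega) hu2' ha
  rcases walk_tail_of_not_arrow (w := w) hG (i := k-1) (by omega) hnab with hab | hab
  case inr =>
    -- undirected edge (k-1, k)
    rw [(by omega : k - 1 + 1 = k)] at hab
    have hnbc : ¬ G.ArrowAt (w.vert k) (w.vert (k+1)) := fun ha =>
      open_pattern₂ hG hopen (k := k) (by omega) (by omega) hab ha
    have htailbc := walk_tail_of_not_arrow (w := w) hG (i := k) (by omega) hnbc
    have hANT : G.AnteriorPath (w.vert (k-1)) (w.vert (k+1)) :=
      anterior_cons_tailAt (Or.inr hab) (anterior_of_tailAt htailbc)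
    exact hG.ancestral _ _ hANT hac
  case inl =>
    rw [(by omega : k - 1 + 1 = k)] at hab
    have harrba : G.ArrowAt (w.vert k) (w.vert (k-1)) := Or.inl hab
    by_cases harrbc : G.ArrowAt (w.vert k) (w.vert (k+1))
    case neg =>
      rcases walk_tail_of_not_arrow (w := w) hG (i := k) (by omega) harrbc with hd | hun
      · have hANT : G.AnteriorPath (w.vert (k-1)) (w.vert (k+1)) :=
          anterior_cons_tailAt (Or.inl hab) (anterior_of_tailAt (Or.inl hd))
        exact hG.ancestral _ _ hANT hac
      · exact open_pattern₁ hG hopen (k := k) (by omega) (by omega) harrba hun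
    case pos =>
      have hcolk : w.IsCollider k :=
        (walk_collider_iff hG (k := k) (by omega) (by omega)).2 ⟨harrba, harrbc⟩
      have hAncb : G.AncS (w.vert k) Z := hopen.2.1 _ hcolk
      have hadjpc : G.Adj (w.vert (k-2)) (w.vert (k+1)) := adj_symm
        (hG.sigma_complete₁ (w.vert (k+1)) (w.vert (k-1)) (w.vert (k-2)) hac
          (G.undir_symm _ _ hu2))
      refine dslide2 hG hpath hopen hmin (tL := k-1) (tR := k+1) (by omega) hkn
        ?_ ?_ (k-2) (k+1) (by omega) le_rfl hkn ?_ (by omega) hadjpc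
      · -- left anchor: kill or step
        intro r htr hrn hRSeg hadj' hl0 hb
        have htaila2 : G.TailAt (w.vert (k-1)) (w.vert (k-1-1)) :=
          Or.inr (G.undir_symm _ _ hu2')
        rcases hb with ⟨h1, h2⟩ | ⟨h1, h2, h3⟩ | ⟨h1, h2⟩ | ⟨h1, h2⟩
        · exact absurd (col_arrow_left hG (not_collider_mem hopen (by omega) h1))
            (fun ha => kill1 hG htaila2 ha)
        · exact absurd h1 (fun ha => kill1 hG htaila2 ha)
        · exact absurd h1 (fun ha => kill1 hG htaila2 ha)
        · refine ⟨by omega, hu2', adj_symm ?_⟩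
          exact hG.sigma_complete₁ (w.vert r) (w.vert (k-1)) (w.vert (k-1-1)) h2
            (G.undir_symm _ _ h1)
      · -- right anchor: kill or step
        intro ℓ hℓt hLSeg hadj' hrn' hb
        have hsegUpA : G.AnteriorPath (w.vert ℓ) (w.vert (k-1)) := seg_anterior_up hℓt hLSeg
        have hsegDownA : G.AnteriorPath (w.vert (k-1)) (w.vert ℓ) :=
          seg_anterior_down hℓt hLSeg
        have deriveDirCA : G.TailAt (w.vert (k+1)) (w.vert ℓ) →
            G.dir (w.vert (k+1)) (w.vert (k-1)) := by
          intro htc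
          have hANT : G.AnteriorPath (w.vert (k+1)) (w.vert (k-1)) :=
            anterior_cons_tailAt htc hsegUpA
          have hnca := hG.ancestral _ _ hANT
          rcases hac with h | h
          · exact h
          · exact absurd (Or.inr (G.bidir_symm _ _ h)) hnca
        rcases hb with ⟨h1, h2⟩ | ⟨h1, h2, h3⟩ | ⟨h1, h2⟩ | ⟨h1, h2⟩
        · exfalso
          have hcolc := not_collider_mem hopen (by omega) h1
          have harrcb := col_arrow_left hG hcolc
          rw [(by omega : k + 1 - 1 = k)] at harrcb
          have harrcq := col_arrow_right hG hcolc
          have hnal : ¬ G.ArrowAt (w.vert (k+1)) (w.vert ℓ) := fun ha => h2 ⟨ha, harrcq⟩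
          have hdca := deriveDirCA ((arrowAt_or_tailAt hG (adj_symm hadj')).resolve_left hnal)
          have hANT : G.AnteriorPath (w.vert (k+1)) (w.vert k) :=
            anterior_cons_tailAt (Or.inl hdca) (anterior_of_tailAt (Or.inl hab))
          exact hG.ancestral _ _ hANT harrcb
        · exfalso
          by_cases hcolc : w.IsCollider (k+1)
          · exact h3 (hopen.2.1 _ hcolc)
          · have hnab2 : ¬ G.ArrowAt (w.vert (k+1)) (w.vert k) := fun ha =>
              hcolc ((walk_collider_iff hG (k := k+1) (by omega) hrn').2
                ⟨by rwa [(by omega : k + 1 - 1 = k)], h2⟩)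
            rcases walk_tail_of_not_arrow' (w := w) hG (i := k) (by omega) hnab2
              with hd | hun
            · exact h3 (ancS_of_dir hd hAncb)
            · exact open_pattern₂ hG hopen (k := k+1) (by omega) hrn'
                (by rw [(by omega : k + 1 - 1 = k)]; exact G.undir_symm _ _ hun) h2
        · exact ⟨by omega, h2,
            hG.sigma_complete₁ (w.vert ℓ) (w.vert (k+1)) (w.vert (k+1+1)) h1 h2⟩
        · exfalso
          have hANT : G.AnteriorPath (w.vert (k-1)) (w.vert (k+1)) :=
            anterior_snoc_tailAt hsegDownA (Or.inr h1)
          exact hG.ancestral _ _ hANT hac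
      · -- the initial left segment
        intro j hj1 hj2
        have hj : j = k - 2 := by omega
        rw [hj, (by omega : k - 2 + 1 = k - 1)]
        exact hu2


/-- From a left-frontier blockage of the triple splice, derive the left seed. -/
lemma seedLeft (hG : G.IsSigmaMAG) (hpath : w.IsPath) (hopen : w.MOpen Z)
    (hmin : ∀ (m : ℕ) (w' : G.Walk m), w'.IsPath → w'.vert 0 = w.vert 0 →
      w'.vert m = w.vert n → w'.MOpen Z → n ≤ m)
    {k : ℕ} (hk2 : 2 ≤ k) (hkn : k + 1 ≤ n)
    (hadj : G.Adj (w.vert (k-1)) (w.vert (k+1)))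
    (hb : (w.vert (k-1) ∈ Z ∧
          ¬(G.ArrowAt (w.vert (k-1)) (w.vert (k-1-1)) ∧
            G.ArrowAt (w.vert (k-1)) (w.vert (k+1))))
       ∨ (G.ArrowAt (w.vert (k-1)) (w.vert (k-1-1)) ∧
          G.ArrowAt (w.vert (k-1)) (w.vert (k+1)) ∧ ¬ G.AncS (w.vert (k-1)) Z)
       ∨ (G.ArrowAt (w.vert (k-1)) (w.vert (k-1-1)) ∧
          G.undir (w.vert (k-1)) (w.vert (k+1)))
       ∨ (G.undir (w.vert (k-1-1)) (w.vert (k-1)) ∧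
          G.ArrowAt (w.vert (k-1)) (w.vert (k+1)))) :
    w.IsCollider (k-1) ∧ w.vert (k-1) ∈ Z ∧ G.dir (w.vert (k-1)) (w.vert (k+1)) := by
  have hkk : k - 1 - 1 = k - 2 := by omega
  have hkk1 : k - 1 + 1 = k := by omega
  rw [hkk] at hb
  rcases hb with ⟨h1, h2⟩ | ⟨h1, h2, h3⟩ | ⟨h1, h2⟩ | ⟨h1, h2⟩
  · -- v_{k-1} ∈ Z, not a splice collider
    have hcol : w.IsCollider (k-1) := not_collider_mem hopen (by omega) h1
    have hal : G.ArrowAt (w.vert (k-1)) (w.vert (k-2)) := by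
      have := col_arrow_left hG hcol
      rwa [hkk] at this
    have hnt : ¬ G.ArrowAt (w.vert (k-1)) (w.vert (k+1)) := fun ha => h2 ⟨hal, ha⟩
    rcases (arrowAt_or_tailAt hG hadj).resolve_left hnt with hdir | hundir
    · exact ⟨hcol, h1, hdir⟩
    · exact absurd (ukill hG hpath hopen hmin hk2 hkn hal hundir) id
  · -- splice collider at v_{k-1}, not ancestor of Z: impossible
    exfalso
    have hncol : ¬ w.IsCollider (k-1) := fun hc => h3 (hopen.2.1 _ hc)
    have hnt : ¬ G.ArrowAt (w.vert (k-1)) (w.vert k) := fun ha => by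
      refine hncol ((walk_collider_iff hG (k := k - 1) (by omega) (by omega)).2
        ⟨by rw [hkk]; exact h1, ?_⟩)
      rwa [hkk1]
    rcases walk_tail_of_not_arrow (w := w) hG (i := k - 1) (by omega)
        (by rw [hkk1]; exact hnt) with hdir | hundir
    · -- v_{k-1} → v_k
      rw [hkk1] at hdir
      by_cases hcolk : w.IsCollider k
      · exact h3 (ancS_of_dir hdir (hopen.2.1 k hcolk))
      · have hba : G.ArrowAt (w.vert k) (w.vert (k-1)) := Or.inl hdir
        have hnbc : ¬ G.ArrowAt (w.vert k) (w.vert (k+1)) := fun ha =>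
          hcolk ((walk_collider_iff hG (k := k) (by omega) (by omega)).2
            ⟨by rw [(by omega : k - 1 = k - 1)]; exact hba, ha⟩)
        rcases walk_tail_of_not_arrow (w := w) hG (i := k) (by omega) hnbc with hd | hu
        · exact kill2 hG (Or.inl hdir) (Or.inl hd) h2
        · exact open_pattern₁ hG hopen (k := k) (by omega) (by omega) hba hu
    · rw [hkk1] at hundir
      exact open_pattern₁ hG hopen (k := k - 1) (by omega) (by omega)
        (by rwa [hkk]) (by rwa [hkk1])
  · exact absurd (ukill hG hpath hopen hmin hk2 hkn h1 h2) id
  · exact absurd (p2kill hG hpath hopen hmin hk2 hkn h1 h2) id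

/-- The seed dichotomy at a shielded triple. -/
lemma seed (hG : G.IsSigmaMAG) (hpath : w.IsPath) (hopen : w.MOpen Z)
    (hmin : ∀ (m : ℕ) (w' : G.Walk m), w'.IsPath → w'.vert 0 = w.vert 0 →
      w'.vert m = w.vert n → w'.MOpen Z → n ≤ m)
    {k : ℕ} (hk0 : 0 < k) (hkn : k + 1 ≤ n)
    (hadj : G.Adj (w.vert (k-1)) (w.vert (k+1))) :
    (2 ≤ k ∧ w.IsCollider (k-1) ∧ w.vert (k-1) ∈ Z ∧
      G.dir (w.vert (k-1)) (w.vert (k+1)))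
    ∨ (k + 2 ≤ n ∧ w.IsCollider (k+1) ∧ w.vert (k+1) ∈ Z ∧
      G.dir (w.vert (k+1)) (w.vert (k-1))) := by
  rcases splice_block_intrinsic (ℓ := k - 1) (r := k + 1) hG (by omega) hkn hadj hpath
    hopen hmin with ⟨hl0, hb⟩ | ⟨hrn, hb⟩
  · exact Or.inl ⟨by omega, seedLeft hG hpath hopen hmin (by omega) hkn hadj hb⟩
  · -- mirror via the reversed walk
    right
    refine ⟨by omega, ?_⟩
    set k' := n - k with hk'
    have e0 : w.reverse.vert (k' - 1) = w.vert (k+1) := by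
      rw [reverse_vert]; congr 1; omega
    have e1 : w.reverse.vert (k' + 1) = w.vert (k-1) := by
      rw [reverse_vert]; congr 1; omega
    have e2 : w.reverse.vert (k' - 1 - 1) = w.vert (k+2) := by
      rw [reverse_vert]; congr 1; omega
    have hres := seedLeft (w := w.reverse) hG (reverse_isPath hpath) (reverse_mOpen hopen)
      (reverse_min hmin) (k := k') (by omega) (by omega)
      (by rw [e0, e1]; exact adj_symm hadj) ?_
    · obtain ⟨hcol, hmem, hdir⟩ := hres
      rw [e0, e1] at hdir
      rw [e0] at hmem
      obtain ⟨-, hcol'⟩ := reverse_collider_iff.1 hcol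
      have : n - (k' - 1) = k + 1 := by omega
      rw [this] at hcol'
      exact ⟨hcol', hmem, hdir⟩
    · rw [e0, e1, e2]
      rcases hb with ⟨g1, g2⟩ | ⟨g1, g2, g3⟩ | ⟨g1, g2⟩ | ⟨g1, g2⟩
      · exact Or.inl ⟨g1, fun ⟨x, y⟩ => g2 ⟨y, x⟩⟩
      · exact Or.inr (Or.inl ⟨g2, g1, g3⟩)
      · exact Or.inr (Or.inr (Or.inr ⟨G.undir_symm _ _ g2, g1⟩))
      · exact Or.inr (Or.inr (Or.inl ⟨g2, G.undir_symm _ _ g1⟩))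

end Seed

section DiscPath

open MixedGraph Mark MAux

variable {V : Type*} {G : MixedGraph V}

/-- The walk `w.vert i, …, w.vert t, y` (a prefix of `w` plus a final edge). -/
def discWalk {n : ℕ} (w : G.Walk n) (i t : ℕ) (hit : i ≤ t) (htn : t ≤ n) (y : V)
    {m₁ m₂ : Mark} (he : G.EdgeMk (w.vert t) y m₁ m₂) : G.Walk (t - i + 1) where
  vert j := if j ≤ t - i then w.vert (i + j) else y
  mk1 j := if j < t - i then w.mk1 (i + j) else m₁
  mk2 j := if j < t - i then w.mk2 (i + j) else m₂
  valid j hj := by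
    rcases Nat.lt_or_ge j (t - i) with h | h
    · rw [if_pos (by omega : j ≤ t - i), if_pos (by omega : j + 1 ≤ t - i), if_pos h,
        if_pos h, (by omega : i + (j + 1) = i + j + 1)]
      exact w.valid (i + j) (by omega)
    · have hj' : j = t - i := by omega
      rw [hj', if_pos le_rfl, if_neg (by omega : ¬ t - i + 1 ≤ t - i),
        if_neg (lt_irrefl (t - i)), if_neg (lt_irrefl (t - i)), (by omega : i + (t - i) = t)]
      exact he

variable {n : ℕ} {w : G.Walk n} {i t : ℕ} {hit : i ≤ t} {htn : t ≤ n} {y : V}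
  {m₁ m₂ : Mark} {he : G.EdgeMk (w.vert t) y m₁ m₂}

lemma discWalk_vert_le {j : ℕ} (h : j ≤ t - i) :
    (discWalk w i t hit htn y he).vert j = w.vert (i + j) := if_pos h

lemma discWalk_vert_last : (discWalk w i t hit htn y he).vert (t - i + 1) = y :=
  if_neg (by omega)

lemma discWalk_mk1_lt {j : ℕ} (h : j < t - i) :
    (discWalk w i t hit htn y he).mk1 j = w.mk1 (i + j) := if_pos h

lemma discWalk_mk1_last : (discWalk w i t hit htn y he).mk1 (t - i) = m₁ :=
  if_neg (lt_irrefl _)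

lemma discWalk_mk2_lt {j : ℕ} (h : j < t - i) :
    (discWalk w i t hit htn y he).mk2 j = w.mk2 (i + j) := if_pos h

lemma discWalk_isPath (hpath : w.IsPath)
    (hy : ∀ j, j ≤ t → w.vert j ≠ y) : (discWalk w i t hit htn y he).IsPath := by
  intro a b ha hb hv
  have key : ∀ c, c ≤ t - i + 1 → (discWalk w i t hit htn y he).vert c =
      (if c ≤ t - i then w.vert (i + c) else y) := fun c _ => rfl
  rw [key a ha, key b hb] at hv
  by_cases h1 : a ≤ t - i <;> by_cases h2 : b ≤ t - i
  · rw [if_pos h1, if_pos h2] at hv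
    have := hpath _ _ (by omega) (by omega) hv
    omega
  · rw [if_pos h1, if_neg h2] at hv
    exact absurd hv (hy _ (by omega))
  · rw [if_neg h1, if_pos h2] at hv
    exact absurd hv.symm (hy _ (by omega))
  · omega

lemma discWalk_collider_interior (hpos : 0 < t - i) {j : ℕ} (h0 : 0 < j) (hj : j < t - i) :
    ((discWalk w i t hit htn y he).IsCollider j ↔ w.IsCollider (i + j)) := by
  unfold MixedGraph.Walk.IsCollider
  have e1 : (discWalk w i t hit htn y he).mk2 (j - 1) = w.mk2 (i + j - 1) := by
    rw [discWalk_mk2_lt (by omega), (by omega : i + (j - 1) = i + j - 1)]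
  have e2 : (discWalk w i t hit htn y he).mk1 j = w.mk1 (i + j) := discWalk_mk1_lt hj
  rw [e1, e2]
  constructor
  · rintro ⟨-, -, ha, hb⟩
    exact ⟨by omega, by omega, ha, hb⟩
  · rintro ⟨-, -, ha, hb⟩
    exact ⟨h0, by omega, ha, hb⟩

lemma discWalk_collider_last (hpos : 0 < t - i) :
    ((discWalk w i t hit htn y he).IsCollider (t - i) ↔
      (w.mk2 (t - 1) = Mark.arrow ∧ m₁ = Mark.arrow)) := by
  unfold MixedGraph.Walk.IsCollider
  have e1 : (discWalk w i t hit htn y he).mk2 (t - i - 1) = w.mk2 (t - 1) := by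
    rw [discWalk_mk2_lt (by omega), (by omega : i + (t - i - 1) = t - 1)]
  rw [e1, discWalk_mk1_last]
  constructor
  · rintro ⟨-, -, ha, hb⟩
    exact ⟨ha, hb⟩
  · rintro ⟨ha, hb⟩
    exact ⟨hpos, by omega, ha, hb⟩

/-- The constructed walk is a discriminating path. -/
lemma discWalk_isDisc (hG : G.IsSigmaMAG) (hpath : w.IsPath)
    (hy : ∀ j, j ≤ t → w.vert j ≠ y)
    (hit2 : i + 2 ≤ t)
    (hnadj : ¬ G.Adj (w.vert i) y)
    (hcols : ∀ s, i < s → s < t → w.IsCollider s ∧ G.dir (w.vert s) y) :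
    (discWalk w i t hit htn y he).IsDiscriminating := by
  refine ⟨by omega, discWalk_isPath hpath hy, ?_, ?_⟩
  · rw [discWalk_vert_last, discWalk_vert_le (by omega : (0:ℕ) ≤ t - i)]
    simpa using hnadj
  · intro j hj0 hjlast
    have hj : j < t - i := by omega
    obtain ⟨hc, hd⟩ := hcols (i + j) (by omega) (by omega)
    constructor
    · exact (discWalk_collider_interior (by omega) hj0 hj).2 hc
    · rw [discWalk_vert_le (le_of_lt hj), discWalk_vert_last]
      exact hd

end DiscPath

section Transfer

open MixedGraph Mark MAux

variable {V : Type*} {H₁ H₂ : MixedGraph V}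

lemma same_isPath {n : ℕ} {w₁ : H₁.Walk n} {w₂ : H₂.Walk n}
    (hsame : ∀ j, w₂.vert j = w₁.vert j) (hpath : w₁.IsPath) : w₂.IsPath := by
  intro a b ha hb hv
  rw [hsame, hsame] at hv
  exact hpath a b ha hb hv

lemma transferLeft (h₁ : H₁.IsSigmaMAG) (h₂ : H₂.IsSigmaMAG) (hcond : Condition1 H₁ H₂)
    {n : ℕ} {w₁ : H₁.Walk n} {w₂ : H₂.Walk n}
    (hpath : w₁.IsPath) (hsame : ∀ j, w₂.vert j = w₁.vert j)
    {k i : ℕ} (hik : i + 2 ≤ k) (hkn : k + 1 ≤ n)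
    (hnadj : ¬ H₁.Adj (w₁.vert i) (w₁.vert (k+1)))
    (hchain : ∀ j, i < j → j < k → w₁.IsCollider j ∧ H₁.dir (w₁.vert j) (w₁.vert (k+1)))
    (hcol2 : ∀ j, i < j → j < k → w₂.IsCollider j) :
    (w₁.IsCollider k ↔ w₂.IsCollider k) := by
  set y := w₁.vert (k+1) with hy
  have hw2path : w₂.IsPath := same_isPath hsame hpath
  have hy1 : ∀ t, t ≤ k → ∀ j, j ≤ t → w₁.vert j ≠ y := by
    intro t ht j hj hv
    have := hpath j (k+1) (by omega) (by omega) hv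
    omega
  have hy2 : ∀ t, t ≤ k → ∀ j, j ≤ t → w₂.vert j ≠ y := by
    intro t ht j hj
    rw [hsame]
    exact hy1 t ht j hj
  have hnadj2 : ¬ H₂.Adj (w₁.vert i) y := fun h => hnadj ((hcond.1 _ _).2 h)
  -- arrowheads in H₂ into chain colliders from the left and from the right
  have harr2L : ∀ t, i < t → t < k → H₂.ArrowAt (w₁.vert t) (w₁.vert (t-1)) := by
    intro t h1 h2
    have := col_arrow_left h₂ (hcol2 t h1 h2)
    rwa [hsame, hsame] at this
  have harr2R : ∀ t, i < t → t < k → H₂.ArrowAt (w₁.vert t) (w₁.vert (t+1)) := by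
    intro t h1 h2
    have := col_arrow_right h₂ (hcol2 t h1 h2)
    rwa [hsame, hsame] at this
  -- the chain parents transfer to H₂
  have hdir2 : ∀ t, i < t → t < k → H₂.dir (w₁.vert t) y := by
    intro t
    induction t using Nat.strong_induction_on with
    | _ t ih =>
      intro ht1 ht2
      obtain ⟨hcol1, hdir1⟩ := hchain t ht1 ht2
      have hAdj2 : H₂.Adj (w₁.vert t) y := (hcond.1 _ _).1 (Or.inl hdir1)
      have hnarr : ¬ H₂.ArrowAt (w₁.vert t) y := by
        rcases Nat.lt_or_ge (i+1) t with hgt | hle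
        · -- t ≥ i + 2 : use a discriminating path
          intro harr
          have hit : i ≤ t := by omega
          have htn : t ≤ n := by omega
          have he₁ : H₁.EdgeMk (w₁.vert t) y Mark.tail Mark.arrow := hdir1
          obtain ⟨m₁, m₂, he₂'⟩ := edgeMk_of_adj ((hcond.1 _ _).1 (Or.inl hdir1))
          have he₂ : H₂.EdgeMk (w₂.vert t) y m₁ m₂ := by rwa [hsame]
          set D₁ := discWalk w₁ i t hit htn y he₁ with hD₁
          set D₂ := discWalk w₂ i t hit htn y he₂ with hD₂
          have hverts : ∀ j, D₂.vert j = D₁.vert j := by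
            intro j
            show (if j ≤ t - i then w₂.vert (i + j) else y) =
              (if j ≤ t - i then w₁.vert (i + j) else y)
            by_cases h : j ≤ t - i
            · rw [if_pos h, if_pos h, hsame]
            · rw [if_neg h, if_neg h]
          have hdisc₁ : D₁.IsDiscriminating := by
            refine discWalk_isDisc h₁ hpath (hy1 t (by omega)) (by omega) hnadj ?_
            intro s hs1 hs2
            exact ⟨(hchain s hs1 (by omega)).1, (hchain s hs1 (by omega)).2⟩
          have hdisc₂ : D₂.IsDiscriminating := by
            refine discWalk_isDisc h₂ hw2path (hy2 t (by omega)) (by omega)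
              (by rw [hsame]; exact hnadj2) ?_
            intro s hs1 hs2
            refine ⟨hcol2 s hs1 (by omega), ?_⟩
            rw [hsame]
            exact ih s (by omega) hs1 (by omega)
          have happ := hcond.2.2 (t - i + 1) D₁ D₂ hverts hdisc₁ hdisc₂
          rw [(by omega : t - i + 1 - 1 = t - i)] at happ
          have hnc1 : ¬ D₁.IsCollider (t - i) := by
            rw [discWalk_collider_last (by omega)]
            rintro ⟨-, h⟩
            exact absurd h (by simp)
          have hc2 : D₂.IsCollider (t - i) := by
            rw [discWalk_collider_last (by omega)]
            refine ⟨?_, ?_⟩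
            · have := harr2L t ht1 ht2
              rw [← hsame, ← hsame] at this
              have hh := (walk_mk2_arrow_iff (w := w₂) h₂ (i := t - 1) (by omega))
              rw [(by omega : t - 1 + 1 = t)] at hh
              exact hh.2 this
            · rw [(edgeMk_mk1_arrow_iff h₂ he₂')]
              exact harr
          exact hnc1 (happ.2 hc2)
        · -- t = i + 1 : use unshielded collider transfer
          have hti : t = i + 1 := by omega
          subst hti
          intro harr
          have hUC2 : H₂.UnshieldedCollider (w₁.vert i) (w₁.vert (i+1)) y := by
            refine ⟨?_, hnadj2, ?_, harr⟩
            · intro hv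
              have := hpath i (k+1) (by omega) (by omega) hv
              omega
            · have := harr2L (i+1) ht1 ht2
              rwa [(by omega : i + 1 - 1 = i)] at this
          have hUC1 := (hcond.2.1 _ _ _).2 hUC2
          exact not_arrowAt_of_tailAt h₁ (Or.inl hdir1) hUC1.2.2.2
      rcases (arrowAt_or_tailAt h₂ hAdj2).resolve_left hnarr with hd | hu
      · exact hd
      · -- undirected in H₂: kill
        exfalso
        rcases Nat.lt_or_ge (i+1) t with hgt | hle
        · refine kill2 h₂ (Or.inl (ih (t-1) (by omega) (by omega) (by omega)))
            (Or.inr (H₂.undir_symm _ _ hu)) ?_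
          have := harr2R (t-1) (by omega) (by omega)
          rwa [(by omega : t - 1 + 1 = t)] at this
        · have hti : t = i + 1 := by omega
          subst hti
          have harrL : H₂.ArrowAt (w₁.vert (i+1)) (w₁.vert i) := by
            have := harr2L (i+1) ht1 ht2
            rwa [(by omega : i + 1 - 1 = i)] at this
          exact hnadj2 (h₂.sigma_complete₁ (w₁.vert i) (w₁.vert (i+1)) y harrL hu)
  -- final step: the full discriminating path for position k
  have hit : i ≤ k := by omega
  have htn : k ≤ n := by omega
  have he₁ : H₁.EdgeMk (w₁.vert k) y (w₁.mk1 k) (w₁.mk2 k) := w₁.valid k (by omega)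
  have he₂ : H₂.EdgeMk (w₂.vert k) y (w₂.mk1 k) (w₂.mk2 k) := by
    have := w₂.valid k (by omega)
    rwa [hsame (k+1)] at this
  set D₁ := discWalk w₁ i k hit htn y he₁ with hD₁
  set D₂ := discWalk w₂ i k hit htn y he₂ with hD₂
  have hverts : ∀ j, D₂.vert j = D₁.vert j := by
    intro j
    show (if j ≤ k - i then w₂.vert (i + j) else y) =
      (if j ≤ k - i then w₁.vert (i + j) else y)
    by_cases h : j ≤ k - i
    · rw [if_pos h, if_pos h, hsame]
    · rw [if_neg h, if_neg h]
  have hdisc₁ : D₁.IsDiscriminating := by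
    refine discWalk_isDisc h₁ hpath (hy1 k le_rfl) (by omega) hnadj ?_
    intro s hs1 hs2
    exact hchain s hs1 hs2
  have hdisc₂ : D₂.IsDiscriminating := by
    refine discWalk_isDisc h₂ hw2path (hy2 k le_rfl) (by omega)
      (by rw [hsame]; exact hnadj2) ?_
    intro s hs1 hs2
    refine ⟨hcol2 s hs1 hs2, ?_⟩
    rw [hsame]
    exact hdir2 s hs1 hs2
  have happ := hcond.2.2 (k - i + 1) D₁ D₂ hverts hdisc₁ hdisc₂
  rw [(by omega : k - i + 1 - 1 = k - i)] at happ
  have e1 : D₁.IsCollider (k - i) ↔ w₁.IsCollider k := by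
    rw [discWalk_collider_last (by omega)]
    unfold MixedGraph.Walk.IsCollider
    constructor
    · rintro ⟨ha, hb⟩
      exact ⟨by omega, by omega, ha, hb⟩
    · rintro ⟨-, -, ha, hb⟩
      exact ⟨ha, hb⟩
  have e2 : D₂.IsCollider (k - i) ↔ w₂.IsCollider k := by
    rw [discWalk_collider_last (by omega)]
    unfold MixedGraph.Walk.IsCollider
    constructor
    · rintro ⟨ha, hb⟩
      exact ⟨by omega, by omega, ha, hb⟩
    · rintro ⟨-, -, ha, hb⟩
      exact ⟨ha, hb⟩
  rw [← e1, ← e2]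
  exact happ

end Transfer

section TransferRight

open MixedGraph Mark MAux

variable {V : Type*} {H₁ H₂ : MixedGraph V}

lemma transferRight (h₁ : H₁.IsSigmaMAG) (h₂ : H₂.IsSigmaMAG) (hcond : Condition1 H₁ H₂)
    {n : ℕ} {w₁ : H₁.Walk n} {w₂ : H₂.Walk n}
    (hpath : w₁.IsPath) (hsame : ∀ j, w₂.vert j = w₁.vert j)
    {k m : ℕ} (hkm : k + 2 ≤ m) (hk1 : 1 ≤ k) (hmn : m ≤ n)
    (hnadj : ¬ H₁.Adj (w₁.vert m) (w₁.vert (k-1)))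
    (hchain : ∀ j, k < j → j < m → w₁.IsCollider j ∧ H₁.dir (w₁.vert j) (w₁.vert (k-1)))
    (hcol2 : ∀ j, k < j → j < m → w₂.IsCollider j) :
    (w₁.IsCollider k ↔ w₂.IsCollider k) := by
  have hsame' : ∀ j, w₂.reverse.vert j = w₁.reverse.vert j := by
    intro j
    rw [reverse_vert, reverse_vert, hsame]
  have e1 : w₁.reverse.vert (n - m) = w₁.vert m := by rw [reverse_vert]; congr 1; omega
  have e2 : w₁.reverse.vert (n - k + 1) = w₁.vert (k - 1) := by
    rw [reverse_vert]; congr 1; omega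
  have key := transferLeft (w₁ := w₁.reverse) (w₂ := w₂.reverse) h₁ h₂ hcond
    (reverse_isPath hpath) hsame' (k := n - k) (i := n - m) (by omega) (by omega)
    (by rw [e1, e2]; exact hnadj) ?_ ?_
  · constructor
    · intro hc
      have h2 := key.1 (reverse_collider_iff.2 ⟨by omega, by
        rw [(by omega : n - (n - k) = k)]; exact hc⟩)
      obtain ⟨-, hc2⟩ := reverse_collider_iff.1 h2
      rwa [(by omega : n - (n - k) = k)] at hc2
    · intro hc
      have h1 := key.2 (reverse_collider_iff.2 ⟨by omega, by
        rw [(by omega : n - (n - k) = k)]; exact hc⟩)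
      obtain ⟨-, hc1⟩ := reverse_collider_iff.1 h1
      rwa [(by omega : n - (n - k) = k)] at hc1
  · intro j hj1 hj2
    have hb : k < n - j ∧ n - j < m := by omega
    obtain ⟨hcj, hdj⟩ := hchain (n - j) hb.1 hb.2
    refine ⟨reverse_collider_iff.2 ⟨by omega, hcj⟩, ?_⟩
    rw [reverse_vert, e2]
    exact hdj
  · intro j hj1 hj2
    exact reverse_collider_iff.2 ⟨by omega, hcol2 (n - j) (by omega) (by omega)⟩

end TransferRight

section NoCross

open MixedGraph Mark MAux

variable {V : Type*} {G : MixedGraph V} {n : ℕ} {w : G.Walk n}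

lemma shift_vert {i m : ℕ} (h : i + m ≤ n) (j : ℕ) :
    (w.shift i m h).vert j = w.vert (i + j) := rfl

lemma shift_collider {i m : ℕ} (h : i + m ≤ n) {t : ℕ} (ht0 : 0 < t) (htm : t < m)
    (hc : w.IsCollider (i + t)) : (w.shift i m h).IsCollider t := by
  obtain ⟨-, -, ha, hb⟩ := hc
  refine ⟨ht0, htm, ?_, ?_⟩
  · show w.mk2 (i + (t - 1)) = Mark.arrow
    rwa [(by omega : i + (t - 1) = i + t - 1)]
  · exact hb

lemma shift_isPath {i m : ℕ} (h : i + m ≤ n) (hpath : w.IsPath) :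
    (w.shift i m h).IsPath := by
  intro a b ha hb hv
  rw [shift_vert, shift_vert] at hv
  have := hpath _ _ (by omega) (by omega) hv
  omega

/-- Two overlapping structures in opposite directions are impossible. -/
lemma nocross (hG : G.IsSigmaMAG) (hpath : w.IsPath)
    {k k' i m : ℕ} (hkk' : k < k')
    (hRm : k + 2 ≤ m) (hmn : m ≤ n) (hk1 : 1 ≤ k)
    (hRadj : ¬ G.Adj (w.vert m) (w.vert (k-1)))
    (hRch : ∀ j, k < j → j < m → w.IsCollider j ∧ G.dir (w.vert j) (w.vert (k-1)))
    (hLi : i + 2 ≤ k') (hk'n : k' + 1 ≤ n)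
    (hLadj : ¬ G.Adj (w.vert i) (w.vert (k'+1)))
    (hLch : ∀ j, i < j → j < k' → w.IsCollider j ∧ G.dir (w.vert j) (w.vert (k'+1)))
    (hcross1 : k' < m) (hcross2 : i < k) : False := by
  rcases Nat.lt_or_ge i (k - 1) with hik | hik
  · rcases Nat.lt_or_ge (k' + 1) m with hkm | hkm
    · -- both strict: two directed edges in opposite directions
      have h1 := (hLch (k-1) (by omega) (by omega)).2
      have h2 := (hRch (k'+1) (by omega) (by omega)).2
      exact ((hG.at_most_one _ _).1 h1).1 h2
    · -- k'+1 = m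
      have hm : m = k' + 1 := by omega
      have h1 := (hLch (k-1) (by omega) (by omega)).2
      exact hRadj (by rw [hm]; exact Or.inr (Or.inl h1))
  · -- i = k - 1
    have hi : i = k - 1 := by omega
    rcases Nat.lt_or_ge (k' + 1) m with hkm | hkm
    · have h2 := (hRch (k'+1) (by omega) (by omega)).2
      exact hLadj (by rw [hi]; exact Or.inr (Or.inl h2))
    · -- tight case: inducing path contradiction
      have hm : m = k' + 1 := by omega
      subst hm hi
      set L := k' + 1 - (k - 1) with hL
      have hsum : (k - 1) + L ≤ n := by omega
      set W := w.shift (k - 1) L hsum with hW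
      have hne : w.vert (k - 1) ≠ w.vert (k' + 1) := fun hv => by
        have := hpath _ _ (by omega) (by omega) hv
        omega
      refine hG.maximal (w.vert (k-1)) (w.vert (k'+1)) hne hLadj
        ⟨L, W, shift_isPath hsum hpath, rfl, ?_, ?_⟩
      · rw [shift_vert]; congr 1; omega
      · intro t ht0 htL
        have htk : k - 1 + t ≤ k' ∧ k ≤ k - 1 + t := by omega
        have hcol : w.IsCollider (k - 1 + t) := by
          rcases Nat.lt_or_ge (k - 1 + t) k' with h | h
          · exact (hLch (k - 1 + t) (by omega) h).1
          · have : k - 1 + t = k' := by omega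
            rw [this]
            exact (hRch k' (by omega) (by omega)).1
        refine ⟨shift_collider hsum ht0 htL hcol, ?_⟩
        rcases Nat.lt_or_ge k (k - 1 + t) with h | h
        · left
          rw [shift_vert, shift_vert, (by omega : k - 1 + 0 = k - 1)]
          exact Relation.ReflTransGen.single (hRch (k - 1 + t) h (by omega)).2
        · right
          have : k - 1 + t = k := by omega
          rw [shift_vert, shift_vert, this, (by omega : k - 1 + L = k' + 1)]
          exact Relation.ReflTransGen.single (hLch k (by omega) (by omega)).2

end NoCross

section WF

open MixedGraph Mark MAux

/-- The abstract combinatorial well-foundedness argument. -/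
lemma wf_abstract {n : ℕ} (B : ℕ → Prop) (LStr RStr : ℕ → ℕ → Prop)
    (hbd : ∀ k, B k → k ≤ n)
    (hstruct : ∀ k, B k →
      (∃ i, LStr k i ∧ ∃ j, B j ∧ i < j ∧ j < k) ∨
      (∃ m, RStr k m ∧ ∃ j, B j ∧ k < j ∧ j < m))
    (hnocross : ∀ p q i m, p < q → RStr p m → LStr q i → q < m → i < p → False) :
    ∀ k, ¬ B k := by
  classical
  have key : ∀ r, B r → ∀ r' i', r < r' → LStr r' i' → i' < r →
      (∀ j, B j → r < j → j < r' → False) → False := by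
    intro r
    induction r using Nat.strong_induction_on with
    | _ r ih =>
      intro hr r' i' hrr' hL' hi' hgap
      rcases hstruct r hr with ⟨i, hL, j₀, hBj₀, hj₀1, hj₀2⟩ | ⟨m, hR, j, hBj, hj1, hj2⟩
      · -- r is left-structured: recurse on the greatest bad element below r
        set P : ℕ → Prop := fun x => B x ∧ i < x ∧ x < r with hP
        have hPj₀ : P j₀ := ⟨hBj₀, hj₀1, hj₀2⟩
        have hspec := Nat.findGreatest_spec (P := P) (n := r) (m := j₀) (by omega) hPj₀
        set js := Nat.findGreatest P r with hjs
        obtain ⟨hBjs, hijs, hjsr⟩ := hspec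
        refine ih js hjsr hBjs r i hjsr hL hijs ?_
        intro j hBj h1 h2
        exact Nat.findGreatest_is_greatest h1 (by omega) ⟨hBj, by omega, h2⟩
      · -- r is right-structured: crossing
        have hjr' : r' ≤ j := by
          by_contra h
          exact hgap j hBj hj1 (by omega)
        exact hnocross r r' i' m hrr' hR hL' (by omega) hi'
  intro k hk
  -- the greatest bad element
  set Q : ℕ → Prop := fun x => B x with hQ
  have hspec := Nat.findGreatest_spec (P := Q) (n := n) (m := k) (hbd k hk) hk
  set R := Nat.findGreatest Q n with hR
  rcases hstruct R hspec with ⟨i, hL, j₀, hBj₀, hj₀1, hj₀2⟩ | ⟨m, hR', j, hBj, hj1, hj2⟩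
  · set P : ℕ → Prop := fun x => B x ∧ i < x ∧ x < R with hP
    have hPj₀ : P j₀ := ⟨hBj₀, hj₀1, hj₀2⟩
    have hspec2 := Nat.findGreatest_spec (P := P) (n := R) (m := j₀) (by omega) hPj₀
    set js := Nat.findGreatest P R with hjs
    obtain ⟨hBjs, hijs, hjsR⟩ := hspec2
    refine key js hBjs R i hjsR hL hijs ?_
    intro j hBj h1 h2
    exact Nat.findGreatest_is_greatest h1 (by omega) ⟨hBj, by omega, h2⟩
  · exact Nat.findGreatest_is_greatest (P := Q) hj1 (hbd j hBj) hBj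

variable {V : Type*} {G : MixedGraph V} {n : ℕ} {w : G.Walk n} {Z : Set V}

/-- Rightward version of the descent. -/
lemma descentRight (hG : G.IsSigmaMAG)
    (hpath : w.IsPath) (hopen : w.MOpen Z)
    (hmin : ∀ (m : ℕ) (w' : G.Walk m), w'.IsPath → w'.vert 0 = w.vert 0 →
      w'.vert m = w.vert n → w'.MOpen Z → n ≤ m)
    {k : ℕ} (hk1 : 1 ≤ k) (hkn : k + 2 ≤ n)
    (hcol : w.IsCollider (k+1)) (hmem : w.vert (k+1) ∈ Z)
    (hdir : G.dir (w.vert (k+1)) (w.vert (k-1))) :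
    ∃ m, k + 2 ≤ m ∧ m ≤ n ∧ ¬ G.Adj (w.vert m) (w.vert (k-1)) ∧
      ∀ j, k < j → j < m → w.IsCollider j ∧ w.vert j ∈ Z ∧
        G.dir (w.vert j) (w.vert (k-1)) := by
  set k' := n - k with hk'
  have e1 : w.reverse.vert (k' + 1) = w.vert (k - 1) := by
    rw [reverse_vert]; congr 1; omega
  have hchain : LeftChain w.reverse Z k' (k' - 2) := by
    intro j hj1 hj2
    have hj : j = k' - 1 := by omega
    subst hj
    have e2 : w.reverse.vert (k' - 1) = w.vert (k + 1) := by
      rw [reverse_vert]; congr 1; omega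
    refine ⟨reverse_collider_iff.2 ⟨by omega, by
      rw [(by omega : n - (k' - 1) = k + 1)]; exact hcol⟩, ?_, ?_⟩
    · rw [e2]; exact hmem
    · rw [e2, e1]; exact hdir
  obtain ⟨i', hi'2, hnadj, hchain'⟩ := descent hG (reverse_isPath hpath)
    (reverse_mOpen hopen) (reverse_min hmin) (k := k') (by omega) (by omega)
    (k' - 2) (by omega) hchain
  refine ⟨n - i', by omega, by omega, ?_, ?_⟩
  · have e3 : w.reverse.vert i' = w.vert (n - i') := by rw [reverse_vert]
    rw [← e3, ← e1]
    exact hnadj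
  · intro j hj1 hj2
    obtain ⟨hc, hm, hd⟩ := hchain' (n - j) (by omega) (by omega)
    have e4 : w.reverse.vert (n - j) = w.vert j := by rw [reverse_vert]; congr 1; omega
    obtain ⟨-, hc'⟩ := reverse_collider_iff.1 hc
    rw [(by omega : n - (n - j) = j)] at hc'
    rw [e4] at hm
    rw [e4, e1] at hd
    exact ⟨hc', hm, hd⟩

end WF

section Unshielded

open MixedGraph Mark MAux

variable {V : Type*} {H₁ H₂ : MixedGraph V}

lemma unshielded_agree (h₁ : H₁.IsSigmaMAG) (h₂ : H₂.IsSigmaMAG)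
    (hcond : Condition1 H₁ H₂) {n : ℕ} {w₁ : H₁.Walk n} {w₂ : H₂.Walk n}
    (hpath : w₁.IsPath) (hsame : ∀ j, w₂.vert j = w₁.vert j)
    {k : ℕ} (hk0 : 0 < k) (hkn : k < n)
    (hnadj : ¬ H₁.Adj (w₁.vert (k-1)) (w₁.vert (k+1))) :
    (w₁.IsCollider k ↔ w₂.IsCollider k) := by
  have hne : w₁.vert (k-1) ≠ w₁.vert (k+1) := fun hv => by
    have := hpath _ _ (by omega) (by omega) hv
    omega
  have hnadj2 : ¬ H₂.Adj (w₁.vert (k-1)) (w₁.vert (k+1)) := fun h =>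
    hnadj ((hcond.1 _ _).2 h)
  constructor
  · intro hc
    have hUC1 : H₁.UnshieldedCollider (w₁.vert (k-1)) (w₁.vert k) (w₁.vert (k+1)) :=
      ⟨hne, hnadj, col_arrow_left h₁ hc, col_arrow_right h₁ hc⟩
    have hUC2 := (hcond.2.1 _ _ _).1 hUC1
    refine (walk_collider_iff h₂ hk0 hkn).2 ⟨?_, ?_⟩
    · rw [hsame, hsame]; exact hUC2.2.2.1
    · rw [hsame, hsame]; exact hUC2.2.2.2
  · intro hc
    have h1 := col_arrow_left h₂ hc
    have h2 := col_arrow_right h₂ hc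
    rw [hsame, hsame] at h1 h2
    have hUC2 : H₂.UnshieldedCollider (w₁.vert (k-1)) (w₁.vert k) (w₁.vert (k+1)) :=
      ⟨hne, hnadj2, h1, h2⟩
    have hUC1 := (hcond.2.1 _ _ _).2 hUC2
    exact (walk_collider_iff h₁ hk0 hkn).2 ⟨hUC1.2.2.1, hUC1.2.2.2⟩

end Unshielded


/-- Let `H₁`, `H₂` be σ-MAGs on the same node set satisfying Condition 1, let `w₁` be a
shortest m-open path given `Z` in `H₁`, and let `w₂` be the corresponding path (same
node sequence) in `H₂`. Then each node is a collider on `w₁` iff it is a collider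
on `w₂`. -/
theorem condition1_preserves_colliders_on_shortest_mOpen {V : Type*}
    (H₁ H₂ : MixedGraph V) (h₁ : H₁.IsSigmaMAG) (h₂ : H₂.IsSigmaMAG)
    (hcond : Condition1 H₁ H₂) (Z : Set V) (n : ℕ)
    (w₁ : H₁.Walk n) (hpath : w₁.IsPath) (hopen : w₁.MOpen Z)
    (hmin : ∀ (m : ℕ) (w' : H₁.Walk m), w'.IsPath → w'.vert 0 = w₁.vert 0 →
      w'.vert m = w₁.vert n → w'.MOpen Z → n ≤ m)
    (w₂ : H₂.Walk n) (hsame : ∀ k, w₂.vert k = w₁.vert k) :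
    ∀ k, w₁.IsCollider k ↔ w₂.IsCollider k := by
  
  classical
  have trivAgree : ∀ k, ¬(0 < k ∧ k < n) → (w₁.IsCollider k ↔ w₂.IsCollider k) := by
    intro k hk
    constructor
    · intro hc; exact absurd ⟨hc.1, hc.2.1⟩ hk
    · intro hc; exact absurd ⟨hc.1, hc.2.1⟩ hk
  set B : ℕ → Prop := fun k => ¬ (w₁.IsCollider k ↔ w₂.IsCollider k) with hB
  set LStr : ℕ → ℕ → Prop := fun k i =>
    i + 2 ≤ k ∧ k + 1 ≤ n ∧ ¬ H₁.Adj (w₁.vert i) (w₁.vert (k+1)) ∧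
      ∀ j, i < j → j < k → w₁.IsCollider j ∧ H₁.dir (w₁.vert j) (w₁.vert (k+1)) with hLS
  set RStr : ℕ → ℕ → Prop := fun k m =>
    k + 2 ≤ m ∧ m ≤ n ∧ 1 ≤ k ∧ ¬ H₁.Adj (w₁.vert m) (w₁.vert (k-1)) ∧
      ∀ j, k < j → j < m → w₁.IsCollider j ∧ H₁.dir (w₁.vert j) (w₁.vert (k-1)) with hRS
  intro k
  by_contra hbad
  refine wf_abstract (n := n) B LStr RStr ?_ ?_ ?_ k hbad
  · intro k' hk'
    by_contra h
    exact hk' (trivAgree k' (by omega))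
  · intro k' hk'
    have hbounds : 0 < k' ∧ k' < n := by
      by_contra h
      exact hk' (trivAgree k' h)
    by_cases hadj : H₁.Adj (w₁.vert (k'-1)) (w₁.vert (k'+1))
    · rcases seed h₁ hpath hopen hmin hbounds.1 (by omega) hadj with
        ⟨hk2, hcol, hmem, hdir⟩ | ⟨hk2n, hcol, hmem, hdir⟩
      · -- left seed
        have hchain0 : LeftChain w₁ Z k' (k'-2) := by
          intro j hj1 hj2
          have hj : j = k' - 1 := by omega
          subst hj
          exact ⟨hcol, hmem, hdir⟩
        obtain ⟨i, hi2, hnadj, hchain⟩ := descent h₁ hpath hopen hmin hk2 (by omega)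
          (k'-2) (by omega) hchain0
        left
        refine ⟨i, ⟨hi2, by omega, hnadj,
          fun j h1 h2 => ⟨(hchain j h1 h2).1, (hchain j h1 h2).2.2⟩⟩, ?_⟩
        by_contra hno
        have hall : ∀ j, i < j → j < k' → (w₁.IsCollider j ↔ w₂.IsCollider j) := by
          intro j h1 h2
          by_contra hj
          exact hno ⟨j, hj, h1, h2⟩
        exact hk' (transferLeft h₁ h₂ hcond hpath hsame hi2 (by omega) hnadj
          (fun j h1 h2 => ⟨(hchain j h1 h2).1, (hchain j h1 h2).2.2⟩)
          (fun j h1 h2 => (hall j h1 h2).1 (hchain j h1 h2).1))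
      · -- right seed
        obtain ⟨m, hm2, hmn, hnadj, hchain⟩ := descentRight h₁ hpath hopen hmin
          (by omega) hk2n hcol hmem hdir
        right
        refine ⟨m, ⟨hm2, hmn, by omega, hnadj,
          fun j h1 h2 => ⟨(hchain j h1 h2).1, (hchain j h1 h2).2.2⟩⟩, ?_⟩
        by_contra hno
        have hall : ∀ j, k' < j → j < m → (w₁.IsCollider j ↔ w₂.IsCollider j) := by
          intro j h1 h2
          by_contra hj
          exact hno ⟨j, hj, h1, h2⟩
        exact hk' (transferRight h₁ h₂ hcond hpath hsame hm2 (by omega) hmn hnadj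
          (fun j h1 h2 => ⟨(hchain j h1 h2).1, (hchain j h1 h2).2.2⟩)
          (fun j h1 h2 => (hall j h1 h2).1 (hchain j h1 h2).1))
    · exact absurd (unshielded_agree h₁ h₂ hcond hpath hsame hbounds.1 hbounds.2 hadj) hk'
  · intro p q i m hpq hRp hLq hqm hip
    exact nocross h₁ hpath hpq hRp.1 hRp.2.1 hRp.2.2.1 hRp.2.2.2.1 hRp.2.2.2.2
      hLq.1 hLq.2.1 hLq.2.2.1 hLq.2.2.2 hqm hip
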